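/- arXiv:1901.09912 — 6 statements merged into one kernel-verified Lean document; each statement's English description precedes it below -/
import Mathlib

section
/- For all real x > 0, the Gamma function satisfies √(2e)·((x+1/2)/e)^(x+1/2) ≤ Γ(x+1) ≤ √(2π)·((x+1/2)/e)^(x+1/2). -/
open Real Filter Topology
open Nat

lemma log_one_add_ge {u : ℝ} (hu : 0 ≤ u) : 2 - 4 / (2 + u) ≤ Real.log (1 + u) := by
  set g : ℝ → ℝ := fun v => Real.log (1 + v) + 4 / (2 + v) with hg
  have hd : ∀ v : ℝ, 0 ≤ v → HasDerivAt g (1 / (1 + v) - 4 / (2 + v) ^ 2) v := by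
    intro v hv
    have h1 : HasDerivAt (fun v : ℝ => Real.log (1 + v)) (1 / (1 + v)) v := by
      simpa using (HasDerivAt.log ((hasDerivAt_id v).const_add 1) (by positivity))
    have h2 : HasDerivAt (fun v : ℝ => 4 / (2 + v)) (4 * (-1 / (2 + v) ^ 2)) v := by
      have := (((hasDerivAt_id v).const_add 2).inv (by positivity)).const_mul (4:ℝ)
      simpa [div_eq_mul_inv, id] using this
    have h3 := h1.add h2
    refine h3.congr_deriv ?_
    ring
  have hmono : MonotoneOn g (Set.Ici (0:ℝ)) := by
    apply monotoneOn_of_deriv_nonneg (convex_Ici 0)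
    · exact fun v hv => ((hd v hv).continuousAt).continuousWithinAt
    · intro v hv
      rw [interior_Ici] at hv
      exact (hd v (le_of_lt hv)).differentiableAt.differentiableWithinAt
    · intro v hv
      rw [interior_Ici] at hv
      replace hv : 0 < v := hv
      rw [(hd v hv.le).deriv]
      rw [sub_nonneg, div_le_div_iff₀ (by nlinarith) (by linarith)]
      nlinarith [sq_nonneg v]
  have h0 : g 0 = 2 := by simp [hg]; norm_num
  have := hmono (Set.mem_Ici.mpr le_rfl) (Set.mem_Ici.mpr hu) hu
  rw [h0] at this
  simp only [hg] at this
  linarith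

lemma inv_le_log_sub {y : ℝ} (hy : 0 ≤ y) :
    1 / (y + 1) ≤ Real.log (y + 3/2) - Real.log (y + 1/2) := by
  have hu : (0:ℝ) ≤ 1 / (y + 1/2) := by positivity
  have h := log_one_add_ge hu
  have e1 : 1 + 1 / (y + 1/2) = (y + 3/2) / (y + 1/2) := by field_simp; ring
  have hne : (y:ℝ) + 1/2 ≠ 0 := by positivity
  have hne2 : 2 + 1 / (y + 1/2) ≠ 0 := by positivity
  have e2 : 2 - 4 / (2 + 1 / (y + 1/2)) = 1 / (y + 1) := by
    field_simp
    ring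
  rw [e1, e2, Real.log_div (by positivity) (by positivity)] at h
  exact h

noncomputable def Fb (x : ℝ) : ℝ :=
  Real.log (Real.Gamma (x + 1)) + (x + 1/2) - (x + 1/2) * Real.log (x + 1/2)

noncomputable def hb (y : ℝ) : ℝ :=
  Real.log (y + 1) + 1 + (y + 1/2) * Real.log (y + 1/2) - (y + 3/2) * Real.log (y + 3/2)

lemma Fb_succ {y : ℝ} (hy : 0 ≤ y) : Fb (y + 1) = Fb y + hb y := by
  have h1 : (0:ℝ) < y + 1 := by linarith
  have hΓpos : 0 < Real.Gamma (y + 1) := Real.Gamma_pos_of_pos h1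
  have hΓ : Real.Gamma (y + 1 + 1) = (y + 1) * Real.Gamma (y + 1) :=
    Real.Gamma_add_one (by positivity)
  have e32 : y + 1 + 1/2 = y + 3/2 := by ring
  simp only [Fb, hb, hΓ, e32, Real.log_mul (ne_of_gt h1) (ne_of_gt hΓpos)]
  ring

lemma hb_hasDeriv {y : ℝ} (hy : 0 < y) :
    HasDerivAt hb (1 / (y + 1) + Real.log (y + 1/2) - Real.log (y + 3/2)) y := by
  have h1 : HasDerivAt (fun y : ℝ => Real.log (y + 1)) (1 / (y + 1)) y := by
    simpa using (HasDerivAt.log ((hasDerivAt_id y).add_const 1) (by positivity))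
  have h2 : HasDerivAt (fun y : ℝ => (y + 1/2) * Real.log (y + 1/2))
      (1 * Real.log (y + 1/2) + (y + 1/2) * (1 / (y + 1/2))) y := by
    exact ((hasDerivAt_id y).add_const (1/2:ℝ)).mul
      (by simpa using (HasDerivAt.log ((hasDerivAt_id y).add_const (1/2:ℝ)) (by positivity)))
  have h3 : HasDerivAt (fun y : ℝ => (y + 3/2) * Real.log (y + 3/2))
      (1 * Real.log (y + 3/2) + (y + 3/2) * (1 / (y + 3/2))) y := by
    exact ((hasDerivAt_id y).add_const (3/2:ℝ)).mul
      (by simpa using (HasDerivAt.log ((hasDerivAt_id y).add_const (3/2:ℝ)) (by positivity)))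
  have h4 := ((h1.add_const 1).add h2).sub h3
  refine h4.congr_deriv ?_
  have hne2 : y + 1/2 ≠ 0 := by positivity
  have hne3 : y + 3/2 ≠ 0 := by positivity
  field_simp
  ring

lemma hb_antitone : AntitoneOn hb (Set.Ici (0:ℝ)) := by
  have hc : ∀ y ∈ Set.Ici (0:ℝ), ContinuousAt hb y := by
    intro y hy
    have hy' : (0:ℝ) ≤ y := hy
    have c1 : ContinuousAt (fun y : ℝ => Real.log (y + 1)) y :=
      (Real.continuousAt_log (by positivity)).comp (by fun_prop)
    have c2 : ContinuousAt (fun y : ℝ => Real.log (y + 1/2)) y :=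
      (Real.continuousAt_log (by positivity)).comp (by fun_prop)
    have c3 : ContinuousAt (fun y : ℝ => Real.log (y + 3/2)) y :=
      (Real.continuousAt_log (by positivity)).comp (by fun_prop)
    exact (((c1.add continuousAt_const).add ((by fun_prop : ContinuousAt (fun y:ℝ => y + 1/2) y).mul c2)).sub
      ((by fun_prop : ContinuousAt (fun y:ℝ => y + 3/2) y).mul c3))
  apply antitoneOn_of_deriv_nonpos (convex_Ici 0)
  · exact fun y hy => (hc y hy).continuousWithinAt
  · intro y hy
    rw [interior_Ici] at hy
    exact (hb_hasDeriv hy).differentiableAt.differentiableWithinAt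
  · intro y hy
    rw [interior_Ici] at hy
    replace hy : 0 < y := hy
    rw [(hb_hasDeriv hy).deriv]
    have := inv_le_log_sub hy.le
    linarith

lemma hb_tendsto : Tendsto hb atTop (𝓝 0) := by
  have key : Tendsto (fun y : ℝ => 1 + Real.log ((y+1)/(y+3/2))
      - (y + 1/2) * Real.log (1 + 1/(y+1/2))) atTop (𝓝 0) := by
    have t1 : Tendsto (fun y : ℝ => Real.log ((y+1)/(y+3/2))) atTop (𝓝 0) := by
      have hl : Tendsto (fun y : ℝ => (y+1)/(y+3/2)) atTop (𝓝 1) := by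
        have hinv : Tendsto (fun y : ℝ => (y+3/2)⁻¹) atTop (𝓝 0) :=
          tendsto_inv_atTop_zero.comp (tendsto_atTop_add_const_right atTop (3/2 : ℝ) tendsto_id)
        have : (fun y : ℝ => (y+1)/(y+3/2)) =ᶠ[atTop] fun y => 1 - (1/2) * (y+3/2)⁻¹ := by
          filter_upwards [eventually_gt_atTop 0] with y hy
          field_simp
          ring
        rw [tendsto_congr' this]
        simpa using tendsto_const_nhds.sub (hinv.const_mul (1/2 : ℝ))
      have := (Real.continuousAt_log one_ne_zero).tendsto.comp hl
      simpa [Function.comp_def] using this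
    have t2 : Tendsto (fun y : ℝ => (y + 1/2) * Real.log (1 + 1/(y+1/2))) atTop (𝓝 1) := by
      have := (Real.tendsto_mul_log_one_add_div_atTop 1).comp
        (tendsto_atTop_add_const_right atTop (1/2 : ℝ) tendsto_id)
      simpa [Function.comp_def] using this
    have := ((tendsto_const_nhds : Tendsto (fun _ : ℝ => (1:ℝ)) atTop (𝓝 1)).add t1).sub t2
    simpa using this
  apply key.congr'
  filter_upwards [eventually_gt_atTop 0] with y hy
  rw [Real.log_div (by positivity) (by positivity),
    show (1:ℝ) + 1/(y+1/2) = (y+3/2)/(y+1/2) by field_simp; ring,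
    Real.log_div (by positivity) (by positivity)]
  simp only [hb]
  ring

lemma hb_nonneg {y : ℝ} (hy : 0 ≤ y) : 0 ≤ hb y := by
  apply le_of_tendsto hb_tendsto
  filter_upwards [eventually_ge_atTop y, eventually_ge_atTop 0] with z hz hz0
  exact hb_antitone hy (Set.mem_Ici.mpr hz0) hz
lemma tendsto_aux (a b : ℝ) :
    Tendsto (fun n : ℕ => ((n:ℝ) + b) * Real.log (1 + a / n)) atTop (𝓝 a) := by
  have h1 : Tendsto (fun y : ℝ => y * Real.log (1 + a / y)) atTop (𝓝 a) :=
    Real.tendsto_mul_log_one_add_div_atTop a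
  have h2 : Tendsto (fun y : ℝ => Real.log (1 + a / y)) atTop (𝓝 0) := by
    have hd : Tendsto (fun y : ℝ => 1 + a / y) atTop (𝓝 (1 + 0)) :=
      tendsto_const_nhds.add (tendsto_const_nhds.div_atTop tendsto_id)
    rw [add_zero] at hd
    simpa [Function.comp_def] using (Real.continuousAt_log one_ne_zero).tendsto.comp hd
  have h4 : Tendsto (fun y : ℝ => (y + b) * Real.log (1 + a / y)) atTop (𝓝 (a + b * 0)) :=
    (h1.add (h2.const_mul b)).congr (fun y => by ring)
  rw [mul_zero, add_zero] at h4
  exact h4.comp tendsto_natCast_atTop_atTop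

lemma tendsto_Fb_nat :
    Tendsto (fun n : ℕ => Fb n) atTop (𝓝 (Real.log (Real.sqrt (2 * π)))) := by
  have h1 : Tendsto (fun n : ℕ => Real.log (Stirling.stirlingSeq n)) atTop
      (𝓝 (Real.log (Real.sqrt π))) :=
    (Real.continuousAt_log (by positivity)).tendsto.comp Stirling.tendsto_stirlingSeq_sqrt_pi
  have h2 := tendsto_aux (1/2) (1/2)
  have hG := ((h1.add_const (1/2 * Real.log 2)).add_const (1/2)).sub h2
  have hlim : Real.log (Real.sqrt π) + 1/2 * Real.log 2 + 1/2 - 1/2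
      = Real.log (Real.sqrt (2 * π)) := by
    rw [Real.log_sqrt (le_of_lt Real.pi_pos), Real.log_sqrt (by positivity),
      Real.log_mul (by norm_num) (ne_of_gt Real.pi_pos)]
    ring
  rw [hlim] at hG
  apply hG.congr'
  filter_upwards [eventually_ge_atTop 1] with n hn
  have hN : (0:ℝ) < (n:ℝ) := by exact_mod_cast Nat.lt_of_lt_of_le Nat.zero_lt_one hn
  have e1 : Real.log (2 * (n:ℝ)) = Real.log 2 + Real.log n :=
    Real.log_mul (by norm_num) (ne_of_gt hN)
  have e2 : Real.log ((n:ℝ) / Real.exp 1) = Real.log n - 1 := by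
    rw [Real.log_div (ne_of_gt hN) (Real.exp_ne_zero 1), Real.log_exp]
  have e3 : Real.log (1 + (1/2) / (n:ℝ)) = Real.log ((n:ℝ) + 1/2) - Real.log n := by
    rw [show (1:ℝ) + (1/2) / (n:ℝ) = ((n:ℝ) + 1/2) / n by field_simp,
      Real.log_div (by positivity) (ne_of_gt hN)]
  have e4 : Real.Gamma ((n:ℝ) + 1) = (n ! : ℝ) := by
    exact_mod_cast Real.Gamma_nat_eq_factorial n
  have e5 := Stirling.log_stirlingSeq_formula n
  rw [e1, e2] at e5
  simp only [Fb, e4, e5, e3]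
  ring
lemma logGamma_bounds {x : ℝ} (hx0 : 0 < x) (hx1 : x ≤ 1) {n : ℕ} (hn : 1 ≤ n) :
    Real.log (Real.Gamma ((n:ℝ) + 1)) + x * Real.log n ≤ Real.log (Real.Gamma (x + n + 1)) ∧
    Real.log (Real.Gamma (x + n + 1)) ≤
      Real.log (Real.Gamma ((n:ℝ) + 1)) + x * Real.log ((n:ℝ) + 1) := by
  have hconv := Real.convexOn_log_Gamma
  have hN : (1:ℝ) ≤ (n:ℝ) := by exact_mod_cast hn
  have hN0 : (0:ℝ) < (n:ℝ) := by linarith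
  set N : ℝ := (n:ℝ) with hNdef
  constructor
  · have hs := hconv.slope_mono_adjacent (x := N) (y := N + 1) (z := N + 1 + x)
      (Set.mem_Ioi.mpr hN0) (Set.mem_Ioi.mpr (by linarith)) (by linarith) (by linarith)
    have d1 : N + 1 - N = 1 := by ring
    have d2 : N + 1 + x - (N + 1) = x := by ring
    rw [d1, d2, div_one] at hs
    have hfn : (Real.log ∘ Real.Gamma) (N + 1) - (Real.log ∘ Real.Gamma) N = Real.log N := by
      simp only [Function.comp]
      rw [Real.Gamma_add_one (ne_of_gt hN0),
        Real.log_mul (ne_of_gt hN0) (ne_of_gt (Real.Gamma_pos_of_pos hN0))]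
      ring
    rw [hfn, le_div_iff₀ hx0] at hs
    simp only [Function.comp] at hs
    have harg : N + 1 + x = x + N + 1 := by ring
    rw [harg] at hs
    nlinarith [hs]
  · have h1 : (0:ℝ) ≤ 1 - x := by linarith
    have hc := hconv.2 (Set.mem_Ioi.mpr (by linarith : (0:ℝ) < N + 1))
      (Set.mem_Ioi.mpr (by linarith : (0:ℝ) < N + 2)) h1 (le_of_lt hx0) (by ring)
    simp only [smul_eq_mul, Function.comp] at hc
    have harg : (1 - x) * (N + 1) + x * (N + 2) = x + N + 1 := by ring
    rw [harg] at hc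
    have hfn : Real.Gamma (N + 2) = (N + 1) * Real.Gamma (N + 1) := by
      rw [show N + 2 = N + 1 + 1 by ring, Real.Gamma_add_one (by positivity)]
    rw [hfn, Real.log_mul (by positivity) (ne_of_gt (Real.Gamma_pos_of_pos (by linarith)))] at hc
    nlinarith [hc]

lemma tendsto_log_one_add_div (a : ℝ) :
    Tendsto (fun n : ℕ => Real.log (1 + a / n)) atTop (𝓝 0) := by
  have h2 : Tendsto (fun y : ℝ => Real.log (1 + a / y)) atTop (𝓝 0) := by
    have hd : Tendsto (fun y : ℝ => 1 + a / y) atTop (𝓝 (1 + 0)) :=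
      tendsto_const_nhds.add (tendsto_const_nhds.div_atTop tendsto_id)
    rw [add_zero] at hd
    simpa [Function.comp_def] using (Real.continuousAt_log one_ne_zero).tendsto.comp hd
  exact h2.comp tendsto_natCast_atTop_atTop

lemma tendsto_Fb_diff {x : ℝ} (hx0 : 0 < x) (hx1 : x ≤ 1) :
    Tendsto (fun n : ℕ => Fb (x + n) - Fb n) atTop (𝓝 0) := by
  set C : ℕ → ℝ := fun n =>
    (x + n + 1/2) * Real.log (x + n + 1/2) - ((n:ℝ) + 1/2) * Real.log ((n:ℝ) + 1/2) with hCdef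
  have hC : Tendsto (fun n : ℕ => C n - x * Real.log n) atTop (𝓝 x) := by
    have t1 := tendsto_aux (x + 1/2) (x + 1/2)
    have t2 := tendsto_aux (1/2) (1/2)
    have h := t1.sub t2
    rw [show x + 1/2 - (1/2 : ℝ) = x by ring] at h
    apply h.congr'
    filter_upwards [eventually_ge_atTop 1] with n hn
    have hN : (0:ℝ) < (n:ℝ) := by exact_mod_cast Nat.lt_of_lt_of_le Nat.zero_lt_one hn
    have e1 : Real.log (1 + (x + 1/2) / (n:ℝ)) = Real.log (x + n + 1/2) - Real.log n := by
      rw [show (1:ℝ) + (x + 1/2) / (n:ℝ) = (x + n + 1/2) / n by field_simp; ring,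
        Real.log_div (by positivity) (ne_of_gt hN)]
    have e2 : Real.log (1 + (1/2) / (n:ℝ)) = Real.log ((n:ℝ) + 1/2) - Real.log n := by
      rw [show (1:ℝ) + (1/2) / (n:ℝ) = ((n:ℝ) + 1/2) / n by field_simp,
        Real.log_div (by positivity) (ne_of_gt hN)]
    rw [e1, e2]
    simp only [hCdef]
    ring
  have hlower : Tendsto (fun n : ℕ => x * Real.log n + x - C n) atTop (𝓝 0) := by
    have h := (tendsto_const_nhds (α := ℕ) (f := atTop) (x := x)).sub hC
    rw [sub_self] at h
    exact h.congr (fun n => by ring)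
  have hupper : Tendsto (fun n : ℕ => x * Real.log ((n:ℝ) + 1) + x - C n) atTop (𝓝 0) := by
    have hlog1 := (tendsto_log_one_add_div 1).const_mul x
    have h := hlower.add hlog1
    rw [show (0:ℝ) + x * 0 = 0 by ring] at h
    apply h.congr'
    filter_upwards [eventually_ge_atTop 1] with n hn
    have hN : (0:ℝ) < (n:ℝ) := by exact_mod_cast Nat.lt_of_lt_of_le Nat.zero_lt_one hn
    have e1 : Real.log (1 + 1 / (n:ℝ)) = Real.log ((n:ℝ) + 1) - Real.log n := by
      rw [show (1:ℝ) + 1 / (n:ℝ) = ((n:ℝ) + 1) / n by field_simp,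
        Real.log_div (by positivity) (ne_of_gt hN)]
    rw [e1]
    ring
  apply tendsto_of_tendsto_of_tendsto_of_le_of_le' hlower hupper
  · filter_upwards [eventually_ge_atTop 1] with n hn
    have hbnd := (logGamma_bounds hx0 hx1 hn).1
    have eS : Fb (x + n) - Fb n = (Real.log (Real.Gamma (x + n + 1))
        - Real.log (Real.Gamma ((n:ℝ) + 1))) + x - C n := by
      simp only [Fb, hCdef]
      ring
    rw [eS]
    linarith
  · filter_upwards [eventually_ge_atTop 1] with n hn
    have hbnd := (logGamma_bounds hx0 hx1 hn).2
    have eS : Fb (x + n) - Fb n = (Real.log (Real.Gamma (x + n + 1))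
        - Real.log (Real.Gamma ((n:ℝ) + 1))) + x - C n := by
      simp only [Fb, hCdef]
      ring
    rw [eS]
    linarith
lemma Fb_add_nat {x : ℝ} (hx : 0 ≤ x) (n : ℕ) :
    Fb (x + n) = Fb x + ∑ k ∈ Finset.range n, hb (x + k) := by
  induction n with
  | zero => simp
  | succ n ih =>
    rw [Nat.cast_succ, show x + ((n:ℝ) + 1) = (x + n) + 1 by ring,
      Fb_succ (add_nonneg hx (Nat.cast_nonneg n)), ih, Finset.sum_range_succ]
    ring

lemma Fb_mono_seq {x : ℝ} (hx : 0 ≤ x) : Monotone (fun n : ℕ => Fb (x + n)) := by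
  apply monotone_nat_of_le_succ
  intro n
  have h0 : (0:ℝ) ≤ x + n := add_nonneg hx (Nat.cast_nonneg n)
  rw [Nat.cast_succ, show x + ((n:ℝ) + 1) = (x + n) + 1 by ring, Fb_succ h0]
  linarith [hb_nonneg h0]

lemma tendsto_Fb_shift {x : ℝ} (hx0 : 0 < x) (hx1 : x ≤ 1) :
    Tendsto (fun n : ℕ => Fb (x + n)) atTop (𝓝 (Real.log (Real.sqrt (2 * π)))) := by
  have h := (tendsto_Fb_diff hx0 hx1).add tendsto_Fb_nat
  rw [zero_add] at h
  exact h.congr (fun n => by ring)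

lemma Fb_le_L {x : ℝ} (hx0 : 0 < x) (hx1 : x ≤ 1) (n : ℕ) :
    Fb (x + n) ≤ Real.log (Real.sqrt (2 * π)) :=
  Monotone.ge_of_tendsto (Fb_mono_seq hx0.le) (tendsto_Fb_shift hx0 hx1) n

lemma Fb_ge_F0 {x : ℝ} (hx0 : 0 < x) (hx1 : x ≤ 1) : Fb 0 ≤ Fb x := by
  have key : ∀ n : ℕ, Fb (x + n) - Fb n ≤ Fb x - Fb 0 := by
    intro n
    have h1 := Fb_add_nat hx0.le n
    have h2 := Fb_add_nat (le_refl (0:ℝ)) n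
    simp only [zero_add] at h2
    have hsum : ∑ k ∈ Finset.range n, hb (x + k) ≤ ∑ k ∈ Finset.range n, hb (k:ℝ) := by
      apply Finset.sum_le_sum
      intro k _
      exact hb_antitone (Set.mem_Ici.mpr (Nat.cast_nonneg k))
        (Set.mem_Ici.mpr (add_nonneg hx0.le (Nat.cast_nonneg k))) (by linarith)
    linarith
  have h0 : (0:ℝ) ≤ Fb x - Fb 0 :=
    le_of_tendsto (tendsto_Fb_diff hx0 hx1) (Eventually.of_forall key)
  linarith

lemma Fb_zero : Fb 0 = Real.log (Real.sqrt (2 * Real.exp 1)) := by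
  have h2 : Real.log (1/2 : ℝ) = -Real.log 2 := by
    rw [show (1:ℝ)/2 = 2⁻¹ by norm_num, Real.log_inv]
  simp only [Fb, zero_add, Real.Gamma_one, Real.log_one,
    Real.log_sqrt (by positivity : (0:ℝ) ≤ 2 * Real.exp 1),
    Real.log_mul (two_ne_zero) (Real.exp_ne_zero 1), Real.log_exp, h2]
  norm_num
  ring

lemma Fb_bounds {x : ℝ} (hx : 0 < x) :
    Real.log (Real.sqrt (2 * Real.exp 1)) ≤ Fb x ∧ Fb x ≤ Real.log (Real.sqrt (2 * π)) := by
  set m : ℕ := ⌈x⌉₊ with hm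
  have hm1 : 1 ≤ m := Nat.one_le_ceil_iff.mpr hx
  set n : ℕ := m - 1 with hn
  have hcast : (n:ℝ) = (m:ℝ) - 1 := by
    rw [hn, Nat.cast_sub hm1, Nat.cast_one]
  set y : ℝ := x - n with hy
  have hylt : 0 < y := by
    have := Nat.ceil_lt_add_one hx.le
    rw [hy, hcast]
    simp only [← hm] at this ⊢
    linarith
  have hyle : y ≤ 1 := by
    have := Nat.le_ceil x
    rw [hy, hcast]
    simp only [← hm] at this ⊢
    linarith
  have hxeq : x = y + n := by rw [hy]; ring
  constructor
  · rw [← Fb_zero, hxeq]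
    calc Fb 0 ≤ Fb y := Fb_ge_F0 hylt hyle
    _ = Fb (y + (0:ℕ)) := by norm_num
    _ ≤ Fb (y + n) := Fb_mono_seq hylt.le (Nat.zero_le n)
  · rw [hxeq]
    exact Fb_le_L hylt hyle n

/-- Batir's double inequality for the Gamma function:
for all `x > 0`, `√(2e)·((x+1/2)/e)^(x+1/2) ≤ Γ(x+1) ≤ √(2π)·((x+1/2)/e)^(x+1/2)`. -/
theorem batir_gamma_inequality (x : ℝ) (hx : 0 < x) :
    Real.sqrt (2 * Real.exp 1) * ((x + 1/2) / Real.exp 1) ^ (x + 1/2) ≤ Real.Gamma (x + 1) ∧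
    Real.Gamma (x + 1) ≤ Real.sqrt (2 * π) * ((x + 1/2) / Real.exp 1) ^ (x + 1/2) := by
  obtain ⟨hlo, hhi⟩ := Fb_bounds hx
  have hpos : (0:ℝ) < x + 1/2 := by linarith
  have hΓpos : 0 < Real.Gamma (x + 1) := Real.Gamma_pos_of_pos (by linarith)
  have hrpow : ((x + 1/2) / Real.exp 1) ^ (x + 1/2)
      = Real.exp ((x + 1/2) * Real.log (x + 1/2) - (x + 1/2)) := by
    rw [Real.rpow_def_of_pos (by positivity),
      Real.log_div (ne_of_gt hpos) (Real.exp_ne_zero 1), Real.log_exp]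
    congr 1
    ring
  simp only [Fb] at hlo hhi
  constructor
  · rw [hrpow, ← Real.exp_log (show (0:ℝ) < Real.sqrt (2 * Real.exp 1) by positivity),
      ← Real.exp_add, ← Real.exp_log hΓpos]
    exact Real.exp_le_exp.mpr (by linarith)
  · rw [hrpow, ← Real.exp_log (show (0:ℝ) < Real.sqrt (2 * π) by positivity),
      ← Real.exp_add, ← Real.exp_log hΓpos]
    exact Real.exp_le_exp.mpr (by linarith)
end

section
/- For every integer k ≥ 1 and real α > -1, the squared weighted L² norm of the monomial x^k on [-1,1] with weight (1-x²)^α equals the Beta function value B(k+1/2, α+1), and satisfies B(k+1/2, α+1) ≤ √(π/e) · Γ(α+1) / k^(α+1). -/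
/-!
The integrand is even, and on `(0, 1]` the substitution `t = x²` turns it into Euler's Beta
integrand `t ^ (k + 1/2 - 1) * (1 - t) ^ α`.

For the bound write `B(k + 1/2, b) = Γ(b) · Γ(a) / Γ(a + b)` with `a = k + 1/2`. For `0 < b ≤ 1`,
log-convexity of `Γ` between `a + b` and `a + b + 1` gives Wendel's inequality
`Γ(a) / Γ(a + b) ≤ (a + b) ^ (1 - b) / a`, and weighted AM-GM bounds `k ^ b (a + b) ^ (1 - b)` by
`b k + (1 - b)(a + b) ≤ k + 9/16 ≤ (25/24) a`; so any constant `≥ 25/24`, in particular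
`√(π/e) ≈ 1.075`, works. The functional equation `Γ(s + 1) = s Γ(s)` then extends the bound to all
`b > 0`, each unit step costing a factor `1 / (a + b - 1) ≤ 1 / k`.
-/

open Real

/-- The Euler Beta function `B(a,b) = Γ(a)Γ(b)/Γ(a+b)`. -/
noncomputable def realBeta (a b : ℝ) : ℝ := Real.Gamma a * Real.Gamma b / Real.Gamma (a + b)

open MeasureTheory Set intervalIntegral

lemma ofReal_beta_integrand {a b t : ℝ} (ht : t ∈ Icc (0 : ℝ) 1) :
    ((t ^ (a - 1) * (1 - t) ^ (b - 1) : ℝ) : ℂ) =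
      (t : ℂ) ^ ((a : ℂ) - 1) * (1 - (t : ℂ)) ^ ((b : ℂ) - 1) := by
  push_cast [Complex.ofReal_cpow ht.1, Complex.ofReal_cpow (sub_nonneg.2 ht.2)]
  rfl

lemma intervalIntegrable_beta_integrand {a b : ℝ} (ha : 0 < a) (hb : 0 < b) :
    IntervalIntegrable (fun t : ℝ => t ^ (a - 1) * (1 - t) ^ (b - 1)) volume 0 1 := by
  refine (Complex.betaIntegral_convergent (u := a) (v := b) (by simpa) (by simpa)).norm.congr
    fun t ht => ?_
  rw [uIoc_of_le zero_le_one] at ht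
  have ht' : t ∈ Icc (0 : ℝ) 1 := Ioc_subset_Icc_self ht
  simp only [← ofReal_beta_integrand ht', Complex.norm_real]
  exact Real.norm_of_nonneg (mul_nonneg (rpow_nonneg ht'.1 _) (rpow_nonneg (sub_nonneg.2 ht'.2) _))

lemma realBeta_eq_integral {a b : ℝ} (ha : 0 < a) (hb : 0 < b) :
    realBeta a b = ∫ t in (0 : ℝ)..1, t ^ (a - 1) * (1 - t) ^ (b - 1) := by
  have h : Complex.betaIntegral a b = ↑(∫ t in (0 : ℝ)..1, t ^ (a - 1) * (1 - t) ^ (b - 1)) := by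
    rw [Complex.betaIntegral, ← integral_ofReal]
    exact integral_congr fun t ht =>
      (ofReal_beta_integrand (by rwa [uIcc_of_le zero_le_one] at ht)).symm
  rw [show realBeta a b = ProbabilityTheory.beta a b from rfl,
    ProbabilityTheory.beta_eq_betaIntegralReal a b ha hb, h, Complex.ofReal_re]

lemma image_sq_Ioc_zero_one : (fun x : ℝ => x ^ 2) '' Ioc 0 1 = Ioc 0 1 := by
  ext t
  constructor
  · rintro ⟨x, ⟨hx0, hx1⟩, rfl⟩
    exact ⟨by positivity, pow_le_one₀ hx0.le hx1⟩
  · rintro ⟨ht0, ht1⟩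
    exact ⟨√t, ⟨sqrt_pos.2 ht0, sqrt_le_one.2 ht1⟩, sq_sqrt ht0.le⟩

lemma hasDerivWithinAt_sq_Ioc : ∀ x ∈ Ioc (0 : ℝ) 1,
    HasDerivWithinAt (fun x : ℝ => x ^ 2) (2 * x) (Ioc 0 1) x := fun x _ => by
  simpa using (hasDerivAt_pow 2 x).hasDerivWithinAt

lemma injOn_sq_Ioc : InjOn (fun x : ℝ => x ^ 2) (Ioc 0 1) :=
  (pow_left_strictMonoOn₀ two_ne_zero).injOn.mono fun _ hx => hx.1.le

section SquareSubstitution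

variable {E : Type*} [NormedAddCommGroup E] [NormedSpace ℝ E]

lemma integral_Ioc_comp_sq (g : ℝ → E) :
    ∫ x in Ioc (0 : ℝ) 1, (2 * x) • g (x ^ 2) = ∫ t in Ioc (0 : ℝ) 1, g t := by
  conv_rhs => rw [← image_sq_Ioc_zero_one, integral_image_eq_integral_abs_deriv_smul
    measurableSet_Ioc hasDerivWithinAt_sq_Ioc injOn_sq_Ioc g]
  refine setIntegral_congr_fun measurableSet_Ioc fun x hx => ?_
  simp [abs_of_pos hx.1]

lemma integrableOn_Ioc_comp_sq_iff (g : ℝ → E) :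
    IntegrableOn (fun x => (2 * x) • g (x ^ 2)) (Ioc 0 1) ↔ IntegrableOn g (Ioc 0 1) := by
  conv_rhs => rw [← image_sq_Ioc_zero_one, integrableOn_image_iff_integrableOn_abs_deriv_smul
    measurableSet_Ioc hasDerivWithinAt_sq_Ioc injOn_sq_Ioc g]
  exact integrableOn_congr_fun (fun x hx => by simp [abs_of_pos hx.1]) measurableSet_Ioc

lemma Function.Even.integral_neg_eq_two_smul {f : ℝ → E} (hf : Function.Even f) {a : ℝ}
    (hfi : IntervalIntegrable f volume 0 a) :
    ∫ x in -a..a, f x = (2 : ℝ) • ∫ x in 0..a, f x := by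
  have hleft : ∫ x in -a..0, f x = ∫ x in 0..a, f x := by
    simpa [hf _] using (integral_comp_neg (a := 0) (b := a) f).symm
  have hfi' : IntervalIntegrable f volume (-a) 0 := by
    simpa [hf _] using ((IntervalIntegrable.iff_comp_neg (f := f)).1 hfi).symm
  rw [← integral_add_adjacent_intervals hfi' hfi, hleft, two_smul]

end SquareSubstitution

lemma sq_rpow_mul_self_eq_pow {x : ℝ} (hx : 0 < x) (k : ℕ) :
    (x ^ 2) ^ ((k : ℝ) + 1 / 2 - 1) * x = x ^ (2 * k) := by
  rw [← rpow_natCast x 2, ← rpow_mul hx.le, ← rpow_add_one hx.ne', ← rpow_natCast x (2 * k)]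
  push_cast
  ring_nf

theorem integral_pow_mul_one_sub_sq_rpow (k : ℕ) {α : ℝ} (hα : -1 < α) :
    ∫ x in (-1 : ℝ)..1, x ^ (2 * k) * (1 - x ^ 2) ^ α = realBeta ((k : ℝ) + 1 / 2) (α + 1) := by
  set f : ℝ → ℝ := fun x => x ^ (2 * k) * (1 - x ^ 2) ^ α
  set g : ℝ → ℝ := fun t => t ^ ((k : ℝ) + 1 / 2 - 1) * (1 - t) ^ (α + 1 - 1)
  have hfg : ∀ x ∈ Ioc (0 : ℝ) 1, (2 * x) • g (x ^ 2) = 2 * f x := fun x hx => by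
    simp only [g, f, smul_eq_mul, add_sub_cancel_right, ← sq_rpow_mul_self_eq_pow hx.1 k]
    ring
  have hfi : IntervalIntegrable f volume 0 1 := by
    have hgi : IntervalIntegrable g volume 0 1 :=
      intervalIntegrable_beta_integrand (by positivity) (by linarith)
    rw [intervalIntegrable_iff_integrableOn_Ioc_of_le zero_le_one] at hgi ⊢
    rwa [← integrableOn_Ioc_comp_sq_iff, integrableOn_congr_fun hfg measurableSet_Ioc,
      IntegrableOn, integrable_const_mul_iff (by norm_num)] at hgi
  have hf : Function.Even f := fun x => by simp only [f, neg_sq, (even_two_mul k).neg_pow]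
  calc ∫ x in (-1 : ℝ)..1, f x = 2 * ∫ x in Ioc (0 : ℝ) 1, f x := by
        rw [hf.integral_neg_eq_two_smul hfi, integral_of_le zero_le_one, smul_eq_mul]
    _ = ∫ x in Ioc (0 : ℝ) 1, (2 * x) • g (x ^ 2) := by
        rw [← MeasureTheory.integral_const_mul]
        exact (setIntegral_congr_fun measurableSet_Ioc hfg).symm
    _ = realBeta ((k : ℝ) + 1 / 2) (α + 1) := by
        rw [integral_Ioc_comp_sq, ← integral_of_le zero_le_one,
          realBeta_eq_integral (by positivity) (by linarith)]

lemma Gamma_add_one_le_Gamma_add_mul_rpow {a b : ℝ} (ha : 0 < a) (hb : 0 < b) (hb1 : b ≤ 1) :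
    Gamma (a + 1) ≤ Gamma (a + b) * (a + b) ^ (1 - b) := by
  obtain hb1 | rfl := hb1.lt_or_eq
  · have hab : 0 < a + b := by linarith
    have h := Gamma_mul_add_mul_le_rpow_Gamma_mul_rpow_Gamma hab (by linarith : 0 < a + b + 1) hb
      (sub_pos.2 hb1) (add_sub_cancel b 1)
    rwa [show b * (a + b) + (1 - b) * (a + b + 1) = a + 1 by ring, Gamma_add_one hab.ne',
      mul_rpow hab.le (Gamma_pos_of_pos hab).le, mul_left_comm, ← rpow_add (Gamma_pos_of_pos hab),
      add_sub_cancel, rpow_one, mul_comm] at h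
  · simp

lemma lt_sqrt_pi_div_exp_one : (25 / 24 : ℝ) < √(π / exp 1) := by
  rw [lt_sqrt (by norm_num), lt_div_iff₀ (exp_pos 1)]
  nlinarith [pi_gt_d2, exp_one_lt_d9]

lemma Gamma_div_Gamma_add_le_of_le_one {x b : ℝ} (hx : 1 ≤ x) (hb : 0 < b) (hb1 : b ≤ 1) :
    Gamma (x + 1 / 2) / Gamma (x + 1 / 2 + b) ≤ √(π / exp 1) / x ^ b := by
  set a := x + 1 / 2
  have ha : 0 < a := by positivity
  have hab : 0 < a + b := by positivity
  have hwendel : Gamma a / Gamma (a + b) ≤ (a + b) ^ (1 - b) / a := by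
    rw [div_le_div_iff₀ (Gamma_pos_of_pos hab) ha, mul_comm, ← Gamma_add_one ha.ne', mul_comm]
    exact Gamma_add_one_le_Gamma_add_mul_rpow ha hb hb1
  have hamgm : x ^ b * (a + b) ^ (1 - b) ≤ b * x + (1 - b) * (a + b) :=
    geom_mean_le_arith_mean2_weighted hb.le (by linarith) (by linarith) hab.le (by ring)
  refine hwendel.trans ?_
  rw [div_le_div_iff₀ ha (rpow_pos_of_pos (by linarith) b)]
  calc (a + b) ^ (1 - b) * x ^ b = x ^ b * (a + b) ^ (1 - b) := mul_comm _ _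
    _ ≤ b * x + (1 - b) * (a + b) := hamgm
    _ ≤ 25 / 24 * a := by nlinarith [sq_nonneg (b - 1 / 4), show a = x + 1 / 2 from rfl]
    _ ≤ √(π / exp 1) * a := by gcongr; exact lt_sqrt_pi_div_exp_one.le

lemma Gamma_div_Gamma_add_le {x b : ℝ} (hx : 1 ≤ x) (hb : 0 < b) :
    Gamma (x + 1 / 2) / Gamma (x + 1 / 2 + b) ≤ √(π / exp 1) / x ^ b := by
  obtain ⟨n, hn⟩ := exists_nat_ge b
  induction n generalizing b with
  | zero => exact absurd hb (not_lt.2 (by simpa using hn))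
  | succ n ih =>
    obtain hb1 | hb1 := le_or_gt b 1
    · exact Gamma_div_Gamma_add_le_of_le_one hx hb hb1
    have hx0 : 0 < x := by linarith
    have hpos : 0 < x + 1 / 2 + (b - 1) := by linarith
    calc Gamma (x + 1 / 2) / Gamma (x + 1 / 2 + b)
        = Gamma (x + 1 / 2) / Gamma (x + 1 / 2 + (b - 1)) / (x + 1 / 2 + (b - 1)) := by
          rw [div_div, mul_comm, ← Gamma_add_one hpos.ne']
          ring_nf
      _ ≤ √(π / exp 1) / x ^ (b - 1) / x := by
          refine div_le_div₀ (by positivity) (ih (by linarith) ?_) hx0 (by linarith)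
          push_cast at hn
          linarith
      _ = √(π / exp 1) / x ^ b := by
          rw [div_div, ← rpow_add_one hx0.ne', sub_add_cancel]

lemma realBeta_add_half_le {x b : ℝ} (hx : 1 ≤ x) (hb : 0 < b) :
    realBeta (x + 1 / 2) b ≤ √(π / exp 1) * Gamma b / x ^ b := by
  rw [realBeta, mul_comm, mul_div_assoc, mul_comm _ (Gamma b), mul_div_assoc]
  exact mul_le_mul_of_nonneg_left (Gamma_div_Gamma_add_le hx hb) (Gamma_pos_of_pos hb).le

/-- For every integer `k ≥ 1` and real `α > -1`,
`‖x^k‖²_{L²(I,ω_α)} = ∫_{-1}^1 x^{2k}(1-x²)^α dx = B(k+1/2, α+1)`, and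
`B(k+1/2, α+1) ≤ √(π/e) · Γ(α+1) / k^(α+1)`. -/
theorem monomial_weighted_norm_sq (k : ℕ) (hk : 1 ≤ k) (α : ℝ) (hα : -1 < α) :
    (∫ x in (-1 : ℝ)..1, x ^ (2 * k) * (1 - x ^ 2) ^ α) = realBeta ((k : ℝ) + 1/2) (α + 1) ∧
    realBeta ((k : ℝ) + 1/2) (α + 1) ≤ Real.sqrt (π / Real.exp 1) * Real.Gamma (α + 1) / (k : ℝ) ^ (α + 1) :=
  ⟨integral_pow_mul_one_sub_sq_rpow k hα,
    realBeta_add_half_le (by exact_mod_cast hk) (by linarith)⟩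
end

section
/- For every real a > -1, the function g_a(x) = (1 + a/x)^(a+x) is decreasing on [1, ∞). -/
/-!
Write `g_a(x) = exp ((a + x) log (1 + a/x))`. The exponent has derivative
`log (1 + a/x) - a/x`, which is `≤ 0` by `log t ≤ t - 1`; so it decreases wherever
`x > 0` and `a + x > 0`, and for `a > -1` this region contains `[1, ∞)`.
-/

open Real Set

lemma one_add_div_pos {a x : ℝ} (hx : 0 < x) (hax : 0 < a + x) : 0 < 1 + a / x := by
  rw [one_add_div hx.ne']
  exact div_pos (by linarith) hx

lemma mem_Ioi_max_zero_neg {a x : ℝ} (hx : x ∈ Ioi (max 0 (-a))) : 0 < x ∧ 0 < a + x := by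
  rw [mem_Ioi, max_lt_iff] at hx
  exact ⟨hx.1, by linarith [hx.2]⟩

lemma hasDerivAt_add_mul_log_one_add_div {a x : ℝ} (hx : 0 < x) (hax : 0 < a + x) :
    HasDerivAt (fun y => (a + y) * log (1 + a / y)) (log (1 + a / x) - a / x) x := by
  have hquot : HasDerivAt (fun y => 1 + a / y) (-(a / x ^ 2)) x := by
    simpa [div_eq_mul_inv] using ((hasDerivAt_inv hx.ne').const_mul a).const_add 1
  refine (((hasDerivAt_id x).const_add a).mul
    (hquot.log (one_add_div_pos hx hax).ne')).congr_deriv ?_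
  have hxa : x + a ≠ 0 := by linarith
  rw [id, one_add_div hx.ne']
  field_simp
  ring

lemma antitoneOn_add_mul_log_one_add_div (a : ℝ) :
    AntitoneOn (fun x => (a + x) * log (1 + a / x)) (Ioi (max 0 (-a))) := by
  have hderiv : ∀ x ∈ Ioi (max 0 (-a)), HasDerivAt (fun x => (a + x) * log (1 + a / x))
      (log (1 + a / x) - a / x) x := fun x hx =>
    hasDerivAt_add_mul_log_one_add_div (mem_Ioi_max_zero_neg hx).1 (mem_Ioi_max_zero_neg hx).2
  refine antitoneOn_of_hasDerivWithinAt_nonpos (f' := fun x => log (1 + a / x) - a / x)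
    (convex_Ioi _) (fun x hx => (hderiv x hx).continuousAt.continuousWithinAt)
    (fun x hx => ?_) (fun x hx => ?_) <;> simp only [interior_Ioi] at hx ⊢
  · exact (hderiv x hx).hasDerivWithinAt
  · obtain ⟨hx, hax⟩ := mem_Ioi_max_zero_neg hx
    linarith [log_le_sub_one_of_pos (one_add_div_pos hx hax)]

lemma antitoneOn_one_add_div_rpow_add (a : ℝ) :
    AntitoneOn (fun x => (1 + a / x) ^ (a + x)) (Ioi (max 0 (-a))) := by
  intro x hx y hy hxy
  obtain ⟨hx₀, hax⟩ := mem_Ioi_max_zero_neg hx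
  obtain ⟨hy₀, hay⟩ := mem_Ioi_max_zero_neg hy
  simp only [rpow_def_of_pos (one_add_div_pos hx₀ hax), rpow_def_of_pos (one_add_div_pos hy₀ hay),
    exp_le_exp, mul_comm (log _)]
  exact antitoneOn_add_mul_log_one_add_div a hx hy hxy

/-- For every real `a > -1`, the function `g_a(x) = (1 + a/x)^(a+x)` is decreasing on `[1, ∞)`. -/
theorem ga_antitoneOn (a : ℝ) (ha : -1 < a) :
    AntitoneOn (fun x : ℝ => (1 + a / x) ^ (a + x)) (Set.Ici (1 : ℝ)) :=
  (antitoneOn_one_add_div_rpow_add a).mono fun x (hx : 1 ≤ x) =>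
    mem_Ioi.2 (max_lt (by linarith) (by linarith))
end

section
/- Let α ≥ 0, c > 0, and ψ_{n,c}^{(α)} the L²(I,ω_α)-normalized eigenfunction of L_c^{(α)} with eigenvalue χ_n^α(c). Then the derivative of χ_n^α(c) with respect to c satisfies ∂_c χ_n^α(c) = 2c ∫_{-1}^{1} x² ψ_{n,c}^{(α)}(x)² (1-x²)^α dx. In particular 0 ≤ ∂_c χ_n^α(c) ≤ 2c, so χ_n^α is nondecreasing in c. -/
/-!
Integrating by parts against the weight `(1 - x²)^α` (the boundary terms vanish because
`(1 - x²)^(α + 1)` does at `±1`) shows that `-(1 - x²) f'' + 2(α + 1) x f'` is symmetric, so for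
the eigenfunctions `ψ_t`, `ψ_c`
`(χ(t) - χ(c)) ⟨ψ_t, ψ_c⟩ = (t² - c²) ⟨ψ_t, x² ψ_c⟩`.
Dividing by `t - c` and letting `t → c` gives the formula once the two inner products converge.
They do because `ψ_t → ψ_c` in `L²`: the convergence is pointwise and the norms are all equal, so
Fatou's lemma applied to `(ψ_t + ψ_c)²` and the parallelogram law force `‖ψ_t - ψ_c‖ → 0`.
The bounds come from `0 ≤ x² ≤ 1`.
-/

open Real MeasureTheory intervalIntegral Filter Topology Set

section L2

variable {X ι : Type*} [MeasurableSpace X] {μ : Measure X} {l : Filter ι}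

theorem eventually_lt_integral_of_tendsto [l.IsCountablyGenerated] [l.NeBot]
    {F : ι → X → ℝ} {G : X → ℝ} (hF0 : ∀ i, 0 ≤ F i) (hF : ∀ i, Integrable (F i) μ)
    (hG : Integrable G μ) (hlim : ∀ᵐ x ∂μ, Tendsto (F · x) l (𝓝 (G x)))
    {b : ℝ} (hb : b < ∫ x, G x ∂μ) : ∀ᶠ i in l, b < ∫ x, F i x ∂μ := by
  rcases lt_or_ge b 0 with hb0 | hb0
  · exact .of_forall fun i ↦ hb0.trans_le (integral_nonneg (hF0 i))
  have hG0 : 0 ≤ᵐ[μ] G := by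
    filter_upwards [hlim] with x hx using ge_of_tendsto' hx fun i ↦ hF0 i x
  have fatou : ENNReal.ofReal b < liminf (fun i ↦ ∫⁻ x, ENNReal.ofReal (F i x) ∂μ) l := calc
    ENNReal.ofReal b < ENNReal.ofReal (∫ x, G x ∂μ) :=
      (ENNReal.ofReal_lt_ofReal_iff (hb0.trans_lt hb)).2 hb
    _ = ∫⁻ x, liminf (fun i ↦ ENNReal.ofReal (F i x)) l ∂μ := by
      rw [ofReal_integral_eq_lintegral_ofReal hG hG0]
      refine lintegral_congr_ae ?_
      filter_upwards [hlim] with x hx using ((ENNReal.tendsto_ofReal hx).liminf_eq).symm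
    _ ≤ _ := lintegral_liminf_le' fun i ↦ (hF i).aemeasurable.ennreal_ofReal
  filter_upwards [eventually_lt_of_lt_liminf fatou] with i hi
  rwa [← ofReal_integral_eq_lintegral_ofReal (hF i) (.of_forall (hF0 i)),
    ENNReal.ofReal_lt_ofReal_iff_of_nonneg hb0] at hi

theorem integral_add_sq_add_integral_sub_sq {f g : X → ℝ} (hf : MemLp f 2 μ) (hg : MemLp g 2 μ) :
    ∫ x, (f x + g x) ^ 2 ∂μ + ∫ x, (f x - g x) ^ 2 ∂μ =
      2 * ∫ x, f x ^ 2 ∂μ + 2 * ∫ x, g x ^ 2 ∂μ := by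
  have hadd : Integrable (fun x ↦ (f x + g x) ^ 2) μ := (hf.add hg).integrable_sq
  have hsub : Integrable (fun x ↦ (f x - g x) ^ 2) μ := (hf.sub hg).integrable_sq
  rw [← integral_add hadd hsub, ← MeasureTheory.integral_const_mul,
    ← MeasureTheory.integral_const_mul,
    ← integral_add (hf.integrable_sq.const_mul 2) (hg.integrable_sq.const_mul 2)]
  exact integral_congr_ae (.of_forall fun x ↦ by ring)

theorem tendsto_integral_sq_sub_of_tendsto [l.IsCountablyGenerated] [l.NeBot]
    {f : ι → X → ℝ} {g : X → ℝ} (hf : ∀ i, MemLp (f i) 2 μ) (hg : MemLp g 2 μ)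
    (hlim : ∀ᵐ x ∂μ, Tendsto (f · x) l (𝓝 (g x)))
    (hnorm : ∀ i, ∫ x, f i x ^ 2 ∂μ = ∫ x, g x ^ 2 ∂μ) :
    Tendsto (fun i ↦ ∫ x, (f i x - g x) ^ 2 ∂μ) l (𝓝 0) := by
  -- Fatou bounds `∫ (f i + g)²` below by `4 ∫ g²`; by the parallelogram law this is an upper
  -- bound on `∫ (f i - g)²`.
  have hlim_add : ∀ᵐ x ∂μ, Tendsto (fun i ↦ (f i x + g x) ^ 2) l (𝓝 ((g x + g x) ^ 2)) := by
    filter_upwards [hlim] with x hx using (hx.add_const (g x)).pow 2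
  have hsum : ∀ i, ∫ x, (f i x + g x) ^ 2 ∂μ + ∫ x, (f i x - g x) ^ 2 ∂μ =
      ∫ x, (g x + g x) ^ 2 ∂μ := fun i ↦ by
    rw [integral_add_sq_add_integral_sub_sq (hf i) hg, hnorm i,
      ← integral_add_sq_add_integral_sub_sq hg hg]
    simp
  refine tendsto_order.2
    ⟨fun a ha ↦ .of_forall fun i ↦ ha.trans_le (integral_nonneg fun x ↦ sq_nonneg _), fun a ha ↦ ?_⟩
  have := eventually_lt_integral_of_tendsto (fun i x ↦ sq_nonneg (f i x + g x))
    (fun i ↦ ((hf i).add hg).integrable_sq) (hg.add hg).integrable_sq hlim_add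
    (sub_lt_self (∫ x, (g x + g x) ^ 2 ∂μ) ha)
  filter_upwards [this] with i hi
  linarith [hsum i]

theorem sq_integral_mul_le {u v : X → ℝ} (hu : MemLp u 2 μ) (hv : MemLp v 2 μ) :
    (∫ x, u x * v x ∂μ) ^ 2 ≤ (∫ x, u x ^ 2 ∂μ) * ∫ x, v x ^ 2 ∂μ := by
  have huv : Integrable (fun x ↦ u x * v x) μ := hu.integrable_mul hv
  have hquad : ∀ s : ℝ, 0 ≤ (∫ x, u x ^ 2 ∂μ) * (s * s) + 2 * (∫ x, u x * v x ∂μ) * s +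
      ∫ x, v x ^ 2 ∂μ := fun s ↦ by
    have h : 0 ≤ ∫ x, (s * u x + v x) ^ 2 ∂μ := integral_nonneg fun x ↦ sq_nonneg _
    have hmid : Integrable (fun x ↦ 2 * s * (u x * v x) + v x ^ 2) μ :=
      (huv.const_mul _).add hv.integrable_sq
    rw [show (fun x ↦ (s * u x + v x) ^ 2) =
        fun x ↦ s * s * u x ^ 2 + (2 * s * (u x * v x) + v x ^ 2) by ext; ring,
      integral_add (hu.integrable_sq.const_mul _) hmid,
      integral_add (huv.const_mul _) hv.integrable_sq, MeasureTheory.integral_const_mul,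
      MeasureTheory.integral_const_mul] at h
    linarith
  have := discrim_le_zero hquad
  rw [discrim] at this
  nlinarith

theorem tendsto_integral_mul_of_tendsto_integral_sq_sub {f : ι → X → ℝ} {g h : X → ℝ}
    (hf : ∀ i, MemLp (f i) 2 μ) (hg : MemLp g 2 μ) (hh : MemLp h 2 μ)
    (hconv : Tendsto (fun i ↦ ∫ x, (f i x - g x) ^ 2 ∂μ) l (𝓝 0)) :
    Tendsto (fun i ↦ ∫ x, f i x * h x ∂μ) l (𝓝 (∫ x, g x * h x ∂μ)) := by
  have hdiff : ∀ i, ∫ x, f i x * h x ∂μ - ∫ x, g x * h x ∂μ =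
      ∫ x, (f i x - g x) * h x ∂μ := fun i ↦ by
    have hfh : Integrable (fun x ↦ f i x * h x) μ := (hf i).integrable_mul hh
    have hgh : Integrable (fun x ↦ g x * h x) μ := hg.integrable_mul hh
    rw [← integral_sub hfh hgh]
    simp only [sub_mul]
  have hsq : Tendsto (fun i ↦ (∫ x, f i x * h x ∂μ - ∫ x, g x * h x ∂μ) ^ 2) l (𝓝 0) := by
    refine squeeze_zero (fun i ↦ sq_nonneg _) (fun i ↦ ?_)
      (by simpa using hconv.mul_const (∫ x, h x ^ 2 ∂μ))
    rw [hdiff]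
    exact sq_integral_mul_le ((hf i).sub hg) hh
  rw [← tendsto_sub_nhds_zero_iff, tendsto_zero_iff_abs_tendsto_zero]
  simpa [Function.comp_def, Real.sqrt_sq_eq_abs] using hsq.sqrt

end L2

theorem HasDerivAt.mul_eq_mul_of_sub_mul_eq {χ φ G H : ℝ → ℝ} {c D φ' a b : ℝ}
    (hχ : HasDerivAt χ D c) (hφ : HasDerivAt φ φ' c) (hG : Tendsto G (𝓝 c) (𝓝 a))
    (hH : Tendsto H (𝓝 c) (𝓝 b)) (hrel : ∀ t, (χ t - χ c) * G t = (φ t - φ c) * H t) :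
    D * a = φ' * b := by
  have hL := (hasDerivAt_iff_tendsto_slope.1 hχ).mul (hG.mono_left nhdsWithin_le_nhds)
  have hR := (hasDerivAt_iff_tendsto_slope.1 hφ).mul (hH.mono_left nhdsWithin_le_nhds)
  refine tendsto_nhds_unique hL (hR.congr fun t ↦ ?_)
  simp only [slope, vsub_eq_sub, smul_eq_mul, mul_assoc, hrel]

-- The prolate operator `L_c^{(α)}` is `jacobiOp α + c² x²`.
noncomputable def jacobiOp (α : ℝ) (f : ℝ → ℝ) (x : ℝ) : ℝ :=
  -(1 - x ^ 2) * deriv (deriv f) x + 2 * (α + 1) * x * deriv f x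

theorem continuous_one_sub_sq_rpow {α : ℝ} (hα : 0 ≤ α) :
    Continuous fun x : ℝ ↦ (1 - x ^ 2) ^ α :=
  (continuous_rpow_const hα).comp (by fun_prop)

theorem continuous_jacobiOp (α : ℝ) {f : ℝ → ℝ} (hf : ContDiff ℝ 2 f) :
    Continuous (jacobiOp α f) := by
  have h1 := hf.continuous_deriv one_le_two
  have h2 := (hf.deriv' (n := 1)).continuous_deriv le_rfl
  unfold jacobiOp; fun_prop

theorem hasDerivAt_one_sub_sq_rpow_mul_deriv {α : ℝ} (hα : 0 ≤ α) {f : ℝ → ℝ}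
    (hf : ContDiff ℝ 2 f) {x : ℝ} (hx : x ∈ Icc (-1 : ℝ) 1) :
    HasDerivAt (fun y ↦ (1 - y ^ 2) ^ (α + 1) * deriv f y)
      (-(jacobiOp α f x * (1 - x ^ 2) ^ α)) x := by
  have hbase : HasDerivAt (fun y : ℝ ↦ 1 - y ^ 2) (-(2 * x)) x := by
    simpa using (hasDerivAt_pow 2 x).const_sub 1
  have hf' : HasDerivAt (deriv f) (deriv (deriv f) x) x :=
    ((hf.deriv' (n := 1)).differentiable one_ne_zero x).hasDerivAt
  refine ((hbase.rpow_const (p := α + 1) (.inr (by linarith))).mul hf').congr_deriv ?_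
  have hx2 : 0 ≤ 1 - x ^ 2 := by nlinarith [hx.1, hx.2]
  rw [add_sub_cancel_right, rpow_add_one' hx2 (by linarith), jacobiOp]
  ring

theorem integral_jacobiOp_mul {α : ℝ} (hα : 0 ≤ α) {f g : ℝ → ℝ} (hf : ContDiff ℝ 2 f)
    (hg : ContDiff ℝ 1 g) :
    ∫ x in (-1 : ℝ)..1, jacobiOp α f x * g x * (1 - x ^ 2) ^ α =
      ∫ x in (-1 : ℝ)..1, (1 - x ^ 2) ^ (α + 1) * deriv f x * deriv g x := by
  have hflux : ∀ x ∈ uIcc (-1 : ℝ) 1, HasDerivAt (fun y ↦ (1 - y ^ 2) ^ (α + 1) * deriv f y)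
      (-(jacobiOp α f x * (1 - x ^ 2) ^ α)) x := fun x hx ↦
    hasDerivAt_one_sub_sq_rpow_mul_deriv hα hf (uIcc_of_le (by norm_num : (-1 : ℝ) ≤ 1) ▸ hx)
  have hg' : ∀ x ∈ uIcc (-1 : ℝ) 1, HasDerivAt g (deriv g x) x := fun x _ ↦
    (hg.differentiable one_ne_zero x).hasDerivAt
  have hw := continuous_one_sub_sq_rpow hα
  have hLf := continuous_jacobiOp α hf
  have hdg := hg.continuous_deriv le_rfl
  have parts := integral_mul_deriv_eq_deriv_mul hflux hg'
    (Continuous.intervalIntegrable (by fun_prop) _ _) (hdg.intervalIntegrable _ _)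
  have hboundary : ∀ y : ℝ, y ^ 2 = 1 → (1 - y ^ 2) ^ (α + 1) = 0 := fun y hy ↦ by
    rw [hy, sub_self, zero_rpow (by linarith)]
  rw [parts, hboundary 1 (by norm_num), hboundary (-1) (by norm_num), zero_mul, zero_mul, zero_mul,
    zero_mul, sub_self, zero_sub, ← intervalIntegral.integral_neg]
  exact integral_congr fun x _ ↦ by ring

theorem integral_jacobiOp_mul_comm {α : ℝ} (hα : 0 ≤ α) {f g : ℝ → ℝ} (hf : ContDiff ℝ 2 f)
    (hg : ContDiff ℝ 2 g) :
    ∫ x in (-1 : ℝ)..1, jacobiOp α f x * g x * (1 - x ^ 2) ^ α =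
      ∫ x in (-1 : ℝ)..1, jacobiOp α g x * f x * (1 - x ^ 2) ^ α := by
  rw [integral_jacobiOp_mul hα hf (hg.of_le one_le_two),
    integral_jacobiOp_mul hα hg (hf.of_le one_le_two)]
  exact integral_congr fun x _ ↦ by ring

theorem integral_jacobiOp_mul_of_eigen {α s a : ℝ} (hα : 0 ≤ α) {f g : ℝ → ℝ}
    (hf : ContDiff ℝ 2 f) (hg : Continuous g)
    (hfa : ∀ x ∈ Ioo (-1 : ℝ) 1, jacobiOp α f x + s ^ 2 * x ^ 2 * f x = a * f x) :
    ∫ x in (-1 : ℝ)..1, jacobiOp α f x * g x * (1 - x ^ 2) ^ α =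
      a * (∫ x in (-1 : ℝ)..1, f x * g x * (1 - x ^ 2) ^ α) -
        s ^ 2 * ∫ x in (-1 : ℝ)..1, f x * (x ^ 2 * g x) * (1 - x ^ 2) ^ α := by
  have hw := continuous_one_sub_sq_rpow hα
  have hfc := hf.continuous
  rw [← intervalIntegral.integral_const_mul, ← intervalIntegral.integral_const_mul,
    ← integral_sub (Continuous.intervalIntegrable (by fun_prop) _ _)
      (Continuous.intervalIntegrable (by fun_prop) _ _)]
  refine integral_congr_Ioo_of_le (by norm_num) fun x hx ↦ ?_
  linear_combination g x * (1 - x ^ 2) ^ α * hfa x hx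

theorem sub_mul_integral_mul_eq_of_eigen {α s t a b : ℝ} (hα : 0 ≤ α) {f g : ℝ → ℝ}
    (hf : ContDiff ℝ 2 f) (hg : ContDiff ℝ 2 g)
    (hfa : ∀ x ∈ Ioo (-1 : ℝ) 1, jacobiOp α f x + s ^ 2 * x ^ 2 * f x = a * f x)
    (hgb : ∀ x ∈ Ioo (-1 : ℝ) 1, jacobiOp α g x + t ^ 2 * x ^ 2 * g x = b * g x) :
    (a - b) * ∫ x in (-1 : ℝ)..1, f x * g x * (1 - x ^ 2) ^ α =
      (s ^ 2 - t ^ 2) * ∫ x in (-1 : ℝ)..1, f x * (x ^ 2 * g x) * (1 - x ^ 2) ^ α := by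
  have hself := integral_jacobiOp_mul_comm hα hf hg
  have hgf : ∫ x in (-1 : ℝ)..1, g x * f x * (1 - x ^ 2) ^ α =
      ∫ x in (-1 : ℝ)..1, f x * g x * (1 - x ^ 2) ^ α := integral_congr fun x _ ↦ by ring
  have hgxf : ∫ x in (-1 : ℝ)..1, g x * (x ^ 2 * f x) * (1 - x ^ 2) ^ α =
      ∫ x in (-1 : ℝ)..1, f x * (x ^ 2 * g x) * (1 - x ^ 2) ^ α := integral_congr fun x _ ↦ by ring
  rw [integral_jacobiOp_mul_of_eigen hα hf hg.continuous hfa,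
    integral_jacobiOp_mul_of_eigen hα hg hf.continuous hgb, hgf, hgxf] at hself
  linear_combination hself

noncomputable def jacobiMeasure (α : ℝ) : Measure ℝ :=
  (volume.restrict (Ioc (-1) 1)).withDensity fun x ↦ ((1 - x ^ 2) ^ α).toNNReal

theorem integral_jacobiMeasure (α : ℝ) (F : ℝ → ℝ) :
    ∫ x, F x ∂jacobiMeasure α = ∫ x in (-1 : ℝ)..1, F x * (1 - x ^ 2) ^ α := by
  rw [jacobiMeasure, integral_withDensity_eq_integral_smul (by fun_prop),
    intervalIntegral.integral_of_le (by norm_num)]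
  refine setIntegral_congr_fun measurableSet_Ioc fun x hx ↦ ?_
  have hx2 : 0 ≤ 1 - x ^ 2 := by nlinarith [hx.1, hx.2]
  rw [NNReal.smul_def, Real.coe_toNNReal _ (rpow_nonneg hx2 α), smul_eq_mul, mul_comm]

theorem Continuous.memLp_jacobiMeasure {α : ℝ} (hα : 0 ≤ α) {F : ℝ → ℝ} (hF : Continuous F) :
    MemLp F 2 (jacobiMeasure α) := by
  refine (memLp_two_iff_integrable_sq hF.aestronglyMeasurable).2 ?_
  rw [jacobiMeasure, integrable_withDensity_iff_integrable_smul (by fun_prop)]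
  have hw := continuous_one_sub_sq_rpow hα
  exact Continuous.integrableOn_Ioc (by fun_prop)

theorem tendsto_integral_mul_of_continuousAt {α c : ℝ} (hα : 0 ≤ α) {ψ : ℝ → ℝ → ℝ}
    (hψc : ∀ x, ContinuousAt (ψ · x) c) (hψ : ∀ t, Continuous (ψ t))
    (hnorm : ∀ t, ∫ x in (-1 : ℝ)..1, ψ t x ^ 2 * (1 - x ^ 2) ^ α =
      ∫ x in (-1 : ℝ)..1, ψ c x ^ 2 * (1 - x ^ 2) ^ α)
    {g : ℝ → ℝ} (hg : Continuous g) :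
    Tendsto (fun t ↦ ∫ x in (-1 : ℝ)..1, ψ t x * g x * (1 - x ^ 2) ^ α) (𝓝 c)
      (𝓝 (∫ x in (-1 : ℝ)..1, ψ c x * g x * (1 - x ^ 2) ^ α)) := by
  simp only [← integral_jacobiMeasure] at hnorm ⊢
  have hL2 := fun t ↦ (hψ t).memLp_jacobiMeasure hα
  exact tendsto_integral_mul_of_tendsto_integral_sq_sub hL2 (hL2 c) (hg.memLp_jacobiMeasure hα)
    (tendsto_integral_sq_sub_of_tendsto hL2 (hL2 c) (.of_forall fun x ↦ hψc x) hnorm)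

theorem integral_sq_mul_sq_mem_Icc {α : ℝ} (hα : 0 ≤ α) {f : ℝ → ℝ} (hf : Continuous f) :
    ∫ x in (-1 : ℝ)..1, x ^ 2 * f x ^ 2 * (1 - x ^ 2) ^ α ∈
      Icc 0 (∫ x in (-1 : ℝ)..1, f x ^ 2 * (1 - x ^ 2) ^ α) := by
  have hw := continuous_one_sub_sq_rpow hα
  have hw0 : ∀ x ∈ Icc (-1 : ℝ) 1, 0 ≤ f x ^ 2 * (1 - x ^ 2) ^ α := fun x hx ↦
    mul_nonneg (sq_nonneg _) (rpow_nonneg (by nlinarith [hx.1, hx.2]) α)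
  refine ⟨integral_nonneg (by norm_num) fun x hx ↦ ?_, integral_mono_on (by norm_num)
    (Continuous.intervalIntegrable (by fun_prop) _ _)
    (Continuous.intervalIntegrable (by fun_prop) _ _) fun x hx ↦ ?_⟩
  · rw [mul_assoc]; exact mul_nonneg (sq_nonneg x) (hw0 x hx)
  · rw [mul_assoc]
    exact mul_le_of_le_one_left (hw0 x hx) (by nlinarith [hx.1, hx.2])

/-- Derivative of the prolate eigenvalue with respect to the bandwidth: if `ψ t` is the
`L²(I,ω_α)`-normalized eigenfunction of `L_t^{(α)} f = -(1-x²)f'' + 2(α+1)x f' + t²x² f` with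
eigenvalue `χ t`, depending smoothly on `t`, then at `t = c > 0`,
`∂_c χ = 2c ∫_{-1}^1 x² ψ_c(x)² (1-x²)^α dx`, and in particular `0 ≤ ∂_c χ ≤ 2c`, so `χ`
is nondecreasing in `c`. -/
theorem chi_deriv_formula (c α : ℝ) (hc : 0 < c) (hα : 0 ≤ α)
    (χ : ℝ → ℝ) (ψ : ℝ → ℝ → ℝ)
    (hχdiff : DifferentiableAt ℝ χ c)
    (hψdiff : ∀ x : ℝ, DifferentiableAt ℝ (fun t => ψ t x) c)
    (hsmooth : ∀ t : ℝ, ContDiff ℝ 2 (ψ t))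
    (heig : ∀ t : ℝ, ∀ x ∈ Set.Ioo (-1 : ℝ) 1,
      -(1 - x ^ 2) * deriv (deriv (ψ t)) x + 2 * (α + 1) * x * deriv (ψ t) x +
        t ^ 2 * x ^ 2 * ψ t x = χ t * ψ t x)
    (hnorm : ∀ t : ℝ, (∫ x in (-1 : ℝ)..1, (ψ t x) ^ 2 * (1 - x ^ 2) ^ α) = 1) :
    deriv χ c = 2 * c * (∫ x in (-1 : ℝ)..1, x ^ 2 * (ψ c x) ^ 2 * (1 - x ^ 2) ^ α) ∧
    0 ≤ deriv χ c ∧ deriv χ c ≤ 2 * c := by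
  have hψ t : Continuous (ψ t) := (hsmooth t).continuous
  have hlim {g : ℝ → ℝ} (hg : Continuous g) := tendsto_integral_mul_of_continuousAt hα
    (fun x ↦ (hψdiff x).continuousAt) hψ (fun t ↦ (hnorm t).trans (hnorm c).symm) hg
  have hsq : HasDerivAt (fun t : ℝ ↦ t ^ 2) (2 * c) c := by simpa using hasDerivAt_pow 2 c
  have hderiv := hχdiff.hasDerivAt.mul_eq_mul_of_sub_mul_eq hsq (hlim (hψ c))
    (hlim (g := fun x ↦ x ^ 2 * ψ c x) (by fun_prop))
    fun t ↦ sub_mul_integral_mul_eq_of_eigen hα (hsmooth t) (hsmooth c) (heig t) (heig c)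
  have hG : ∫ x in (-1 : ℝ)..1, ψ c x * ψ c x * (1 - x ^ 2) ^ α = 1 :=
    (integral_congr fun x _ ↦ by ring).trans (hnorm c)
  have hH : ∫ x in (-1 : ℝ)..1, ψ c x * (x ^ 2 * ψ c x) * (1 - x ^ 2) ^ α =
      ∫ x in (-1 : ℝ)..1, x ^ 2 * ψ c x ^ 2 * (1 - x ^ 2) ^ α := integral_congr fun x _ ↦ by ring
  rw [hG, hH, mul_one] at hderiv
  obtain ⟨h0, h1⟩ := integral_sq_mul_sq_mem_Icc hα (hψ c)
  rw [hnorm c] at h1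
  refine ⟨hderiv, ?_, ?_⟩ <;> rw [hderiv]
  · exact mul_nonneg (by positivity) h0
  · exact mul_le_of_le_one_right (by positivity) h1
end

section
/- For integers m ≥ 1 and k ≥ 0, the inner product of the exponential e^{ikπx} with the normalized Jacobi polynomial P̃_m^{(α,α)} in L²([-1,1],(1-x²)^α dx) satisfies |⟨e^{ikπx}, P̃_m^{(α,α)}⟩| ≤ √(π/(2m+1)) · (kπe/(2m+1))^m. -/
open Real MeasureTheory intervalIntegral

namespace EJ
open Polynomial Finset
open Stirling

noncomputable def Q (γ : ℝ) : ℕ → Polynomial ℝ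
  | 0 => 1
  | (j+1) => (1 - X^2) * (Q γ j).derivative - C (2*(γ - j)) * (X * Q γ j)

lemma natDegree_Q (γ : ℝ) : ∀ j, (Q γ j).natDegree ≤ j := by
  intro j
  induction j with
  | zero => simp [Q]
  | succ j ih =>
    rw [Q]
    refine (natDegree_sub_le _ _).trans (max_le ?_ ?_)
    · rcases Nat.eq_zero_or_pos j with hj | hj
      · subst hj
        have : (Q γ 0) = 1 := rfl
        simp [this]
      · have h1 : (1 - X^2 : Polynomial ℝ).natDegree ≤ 2 := by
          refine (natDegree_sub_le _ _).trans ?_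
          simp
        have h2 : (Q γ j).derivative.natDegree ≤ j - 1 :=
          (natDegree_derivative_le _).trans (Nat.sub_le_sub_right ih 1)
        have := natDegree_mul_le (p := (1 - X^2 : Polynomial ℝ)) (q := (Q γ j).derivative)
        omega
    · refine (natDegree_C_mul_le _ _).trans (natDegree_mul_le.trans ?_)
      have h3 := natDegree_X_le (R := ℝ)
      omega

noncomputable def l (γ : ℝ) : ℕ → ℝ
  | 0 => 1
  | (j+1) => -(2*γ - j) * l γ j

lemma coeff_Q (γ : ℝ) (j : ℕ) : (Q γ j).coeff j = l γ j := by
  induction j with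
  | zero => simp [Q, l]
  | succ j ih =>
    have hd : (Q γ j).coeff (j+2) = 0 :=
      coeff_eq_zero_of_natDegree_lt (by have := natDegree_Q γ j; omega)
    have h1 : ((1 - X^2) * (Q γ j).derivative).coeff (j+1)
        = - (j * l γ j) := by
      have : ((1 - X^2) * (Q γ j).derivative) = (Q γ j).derivative - X^2 * (Q γ j).derivative := by
        ring
      rw [this, coeff_sub, coeff_derivative, hd, coeff_X_pow_mul']
      rcases Nat.eq_zero_or_pos j with hj | hj
      · subst hj; simp
      · have h2le : 2 ≤ j + 1 := by omega
        rw [if_pos h2le]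
        have : j + 1 - 2 = j - 1 := by omega
        rw [this, coeff_derivative]
        have : j - 1 + 1 = j := by omega
        rw [this, ih]
        have hc : ((j - 1 : ℕ) : ℝ) = (j : ℝ) - 1 := by
          push_cast [Nat.cast_sub (by omega : 1 ≤ j)]; ring
        rw [hc]; ring
    rw [Q, coeff_sub, h1, coeff_C_mul, coeff_X_mul, ih, l]
    push_cast
    ring

lemma l_eq (γ : ℝ) (j : ℕ) : l γ j = (-1)^j * ∏ i ∈ range j, (2*γ - i) := by
  induction j with
  | zero => simp [l]
  | succ j ih => rw [l, ih, prod_range_succ]; ring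

noncomputable def h (γ : ℝ) (j : ℕ) (x : ℝ) : ℝ :=
  (1 - x^2) ^ (γ - (j:ℝ)) * (Q γ j).eval x

lemma continuous_h (γ : ℝ) (j : ℕ) (hj : 0 ≤ γ - (j:ℝ)) : Continuous (h γ j) := by
  exact ((Real.continuous_rpow_const hj).comp (by continuity)).mul (Q γ j).continuous_aeval

lemma hasDerivAt_h (γ : ℝ) (j : ℕ) (hj : 1 ≤ γ - (j:ℝ)) (x : ℝ) :
    HasDerivAt (h γ j) (h γ (j+1) x) x := by
  have hin : HasDerivAt (fun x : ℝ => 1 - x^2) (-(2*x)) x := by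
    simpa using ((hasDerivAt_pow 2 x).const_sub 1)
  have hrp : HasDerivAt (fun x : ℝ => (1 - x^2) ^ (γ - (j:ℝ)))
      ((γ - j) * (1 - x^2) ^ (γ - (j:ℝ) - 1) * (-(2*x))) x := by
    exact (Real.hasDerivAt_rpow_const (x := 1 - x^2) (p := γ - j) (Or.inr hj)).comp x hin
  have hq : HasDerivAt (fun x : ℝ => (Q γ j).eval x) ((Q γ j).derivative.eval x) x :=
    (Q γ j).hasDerivAt x
  have hmul := hrp.mul hq
  have key : (1 - x^2) ^ (γ - (j:ℝ)) = (1 - x^2) ^ (γ - (j:ℝ) - 1) * (1 - x^2) := by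
    rcases eq_or_ne (1 - x^2) 0 with h0 | h0
    · rw [h0, Real.zero_rpow (by intro hc; rw [hc] at hj; norm_num at hj), mul_zero]
    · rw [← Real.rpow_add_one h0]; ring_nf
  have hval : (1 - x^2) ^ (γ - (j:ℝ)) * (Q γ j).derivative.eval x
      + ((γ - j) * (1 - x^2) ^ (γ - (j:ℝ) - 1) * (-(2*x))) * (Q γ j).eval x
      = h γ (j+1) x := by
    rw [h, Q]
    push_cast
    rw [key]
    simp only [eval_sub, eval_mul, eval_C, eval_X, eval_one, eval_pow, eval_add]
    ring_nf
  convert hmul using 1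
  show h γ (j + 1) x = _
  rw [← hval]; ring
  all_goals rfl

lemma h_boundary (γ : ℝ) (j : ℕ) (hj : 0 < γ - (j:ℝ)) :
    h γ j 1 = 0 ∧ h γ j (-1) = 0 := by
  constructor <;>
  · rw [h]
    norm_num
    left
    exact Real.zero_rpow (ne_of_gt hj)

noncomputable def F (l : ℝ) (x : ℝ) : ℂ := Complex.exp (Complex.I * ((l * x : ℝ) : ℂ))

lemma hasDerivAt_F (l x : ℝ) : HasDerivAt (F l) (Complex.I * l * F l x) x := by
  have h1 : HasDerivAt (fun x : ℝ => ((l * x : ℝ) : ℂ)) l x :=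
    HasDerivAt.ofReal_comp (by simpa using (hasDerivAt_id x).const_mul l)
  have h2 := (h1.const_mul Complex.I).cexp
  have he : F l = fun y : ℝ => Complex.exp (Complex.I * ((l * y : ℝ) : ℂ)) := rfl
  rw [he]
  convert h2 using 1
  simp only [F]
  ring

lemma continuous_F (l : ℝ) : Continuous (F l) := by
  unfold F; continuity

lemma ibp_complex (γ l : ℝ) (j : ℕ) (hj : 1 ≤ γ - (j:ℝ)) :
    (∫ x in (-1:ℝ)..1, F l x * (h γ (j+1) x : ℂ))
      = -(Complex.I * l) * ∫ x in (-1:ℝ)..1, F l x * (h γ j x : ℂ) := by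
  have hu : ∀ x ∈ Set.uIcc (-1:ℝ) 1, HasDerivAt (F l) (Complex.I * l * F l x) x :=
    fun x _ => hasDerivAt_F l x
  have hv : ∀ x ∈ Set.uIcc (-1:ℝ) 1,
      HasDerivAt (fun x => ((h γ j x : ℝ) : ℂ)) ((h γ (j+1) x : ℝ) : ℂ) x :=
    fun x _ => (hasDerivAt_h γ j hj x).ofReal_comp
  have hu' : IntervalIntegrable (fun x => Complex.I * l * F l x) volume (-1) 1 :=
    (continuous_const.mul (continuous_F l)).intervalIntegrable _ _
  have h1c : Continuous (h γ (j+1)) := continuous_h γ (j+1) (by push_cast; linarith)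
  have hv' : IntervalIntegrable (fun x => ((h γ (j+1) x : ℝ) : ℂ)) volume (-1) 1 :=
    (Complex.continuous_ofReal.comp h1c).intervalIntegrable _ _
  have hibp := intervalIntegral.integral_mul_deriv_eq_deriv_mul hu hv hu' hv'
  rw [hibp]
  have hb := h_boundary γ j (by linarith)
  rw [hb.1, hb.2]
  simp only [Complex.ofReal_zero, mul_zero, sub_zero, zero_sub]
  rw [show (fun x => Complex.I * (l:ℂ) * F l x * ((h γ j x : ℝ) : ℂ))
      = (fun x => (Complex.I * (l:ℂ)) * (F l x * ((h γ j x : ℝ) : ℂ))) by funext x; ring]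
  rw [intervalIntegral.integral_const_mul]
  ring

lemma F_hn (γ l : ℝ) (m : ℕ) (hγ : (m:ℝ) ≤ γ) :
    ∀ n, n ≤ m → (∫ x in (-1:ℝ)..1, F l x * (h γ n x : ℂ))
      = (-(Complex.I*l))^n * ∫ x in (-1:ℝ)..1, F l x * (h γ 0 x : ℂ) := by
  intro n
  induction n with
  | zero => simp
  | succ n ih =>
    intro hn
    have h1 : 1 ≤ γ - (n:ℝ) := by
      have : ((n:ℝ)) + 1 ≤ (m:ℝ) := by exact_mod_cast hn
      linarith
    rw [ibp_complex γ l n h1, ih (by omega), pow_succ]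
    ring

lemma ibp_real (γ : ℝ) (j : ℕ) (hj : 1 ≤ γ - (j:ℝ)) (S : Polynomial ℝ) :
    (∫ x in (-1:ℝ)..1, S.eval x * h γ (j+1) x)
      = -∫ x in (-1:ℝ)..1, S.derivative.eval x * h γ j x := by
  have hu : ∀ x ∈ Set.uIcc (-1:ℝ) 1, HasDerivAt (fun x => S.eval x) (S.derivative.eval x) x :=
    fun x _ => S.hasDerivAt x
  have hv : ∀ x ∈ Set.uIcc (-1:ℝ) 1, HasDerivAt (h γ j) (h γ (j+1) x) x :=
    fun x _ => hasDerivAt_h γ j hj x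
  have hu' : IntervalIntegrable (fun x => S.derivative.eval x) volume (-1) 1 :=
    S.derivative.continuous.intervalIntegrable _ _
  have h1c : Continuous (h γ (j+1)) := continuous_h γ (j+1) (by push_cast; linarith)
  have hv' : IntervalIntegrable (h γ (j+1)) volume (-1) 1 := h1c.intervalIntegrable _ _
  have hibp := intervalIntegral.integral_mul_deriv_eq_deriv_mul hu hv hu' hv'
  rw [hibp]
  have hb := h_boundary γ j (by linarith)
  rw [hb.1, hb.2]
  ring

lemma poly_hn (γ : ℝ) (m : ℕ) (hγ : (m:ℝ) ≤ γ) :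
    ∀ n, n ≤ m → ∀ S : Polynomial ℝ, (∫ x in (-1:ℝ)..1, S.eval x * h γ n x)
      = (-1:ℝ)^n * ∫ x in (-1:ℝ)..1, (derivative^[n] S).eval x * h γ 0 x := by
  intro n
  induction n with
  | zero => intro _ S; simp
  | succ n ih =>
    intro hn S
    have h1 : 1 ≤ γ - (n:ℝ) := by
      have : ((n:ℝ)) + 1 ≤ (m:ℝ) := by exact_mod_cast hn
      linarith
    rw [ibp_real γ n h1 S, ih (by omega) S.derivative, Function.iterate_succ_apply, pow_succ]
    ring

lemma J_step (n : ℕ) :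
    (2*(n:ℝ)+3) * ∫ x in (-1:ℝ)..1, (1-x^2)^(n+1)
      = (2*(n:ℝ)+2) * ∫ x in (-1:ℝ)..1, (1-x^2)^n := by
  have hd : ∀ x ∈ Set.uIcc (-1:ℝ) 1, HasDerivAt (fun x : ℝ => x*(1-x^2)^(n+1))
      ((2*(n:ℝ)+3) * (1-x^2)^(n+1) - (2*(n:ℝ)+2) * (1-x^2)^n) x := by
    intro x _
    have h1 : HasDerivAt (fun x : ℝ => 1 - x^2) (-(2*x)) x := by
      simpa using ((hasDerivAt_pow 2 x).const_sub 1)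
    convert (hasDerivAt_id x).mul (h1.pow (n+1)) using 1
    · rfl
    · rfl
    · rfl
    simp only [Nat.add_sub_cancel, id_eq, Pi.pow_apply]
    push_cast
    ring
  have hint : IntervalIntegrable
      (fun x : ℝ => (2*(n:ℝ)+3) * (1-x^2)^(n+1) - (2*(n:ℝ)+2) * (1-x^2)^n) volume (-1) 1 :=
    (Continuous.intervalIntegrable (by continuity)) _ _
  have heq := intervalIntegral.integral_eq_sub_of_hasDerivAt hd hint
  have hz : (∫ x in (-1:ℝ)..1,
      ((2*(n:ℝ)+3) * (1-x^2)^(n+1) - (2*(n:ℝ)+2) * (1-x^2)^n)) = 0 := by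
    rw [heq]; norm_num
  have hi1 : IntervalIntegrable (fun x : ℝ => (1-x^2)^(n+1)) volume (-1) 1 :=
    (Continuous.intervalIntegrable (by continuity)) _ _
  have hi0 : IntervalIntegrable (fun x : ℝ => (1-x^2)^n) volume (-1) 1 :=
    (Continuous.intervalIntegrable (by continuity)) _ _
  rw [intervalIntegral.integral_sub (hi1.const_mul _) (hi0.const_mul _),
    intervalIntegral.integral_const_mul, intervalIntegral.integral_const_mul] at hz
  linarith

lemma J_formula : ∀ n : ℕ, (∫ x in (-1:ℝ)..1, (1-x^2)^n)
    = 2^(2*n+1) * (n.factorial : ℝ)^2 / ((2*n+1).factorial : ℝ) := by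
  intro n
  induction n with
  | zero => norm_num
  | succ n ih =>
    have hstep := J_step n
    rw [ih] at hstep
    have h3 : (0:ℝ) < 2*(n:ℝ)+3 := by positivity
    have : (∫ x in (-1:ℝ)..1, (1-x^2)^(n+1))
        = (2*(n:ℝ)+2) * (2^(2*n+1) * (n.factorial : ℝ)^2 / ((2*n+1).factorial : ℝ)) / (2*(n:ℝ)+3) := by
      field_simp at hstep ⊢
      linarith
    rw [this]
    have hf1 : ((2*(n+1)+1).factorial : ℝ) = (2*(n:ℝ)+3) * ((2*(n:ℝ)+2) * ((2*n+1).factorial : ℝ)) := by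
      have : 2*(n+1)+1 = (2*n+1) + 1 + 1 := by ring
      rw [this, Nat.factorial_succ, Nat.factorial_succ]
      push_cast
      ring
    have hf2 : ((n+1).factorial : ℝ) = ((n:ℝ)+1) * (n.factorial : ℝ) := by
      rw [Nat.factorial_succ]; push_cast; ring
    rw [hf1, hf2]
    have hfz : ((2*n+1).factorial : ℝ) ≠ 0 := by positivity
    field_simp
    ring

lemma iterate_derivative_of_natDegree_le :
    ∀ (n : ℕ) (p : Polynomial ℝ), p.natDegree ≤ n →
      derivative^[n] p = C ((n.factorial : ℝ) * p.coeff n) := by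
  intro n
  induction n with
  | zero => intro p hp; simpa using eq_C_of_natDegree_le_zero hp
  | succ n ih =>
    intro p hp
    rw [Function.iterate_succ_apply, ih p.derivative
      ((natDegree_derivative_le p).trans (by omega)), coeff_derivative]
    congr 1
    push_cast [Nat.factorial_succ]
    ring

lemma eq_zero_of_integral_sq (α : ℝ) (hα : 0 ≤ α) (R : Polynomial ℝ)
    (h : (∫ x in (-1:ℝ)..1, (R.eval x)^2 * (1 - x^2)^α) = 0) : R = 0 := by
  by_contra hR
  set f : ℝ → ℝ := fun x => (R.eval x)^2 * (1 - x^2)^α with hf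
  have hcont : Continuous f :=
    (R.continuous.pow 2).mul ((Real.continuous_rpow_const hα).comp (by continuity))
  have hfi : IntervalIntegrable f volume (-1) 1 := hcont.intervalIntegrable _ _
  have huIoc : Set.uIoc (-1:ℝ) 1 = Set.Ioc (-1:ℝ) 1 := Set.uIoc_of_le (by norm_num)
  have hae : 0 ≤ᵐ[volume.restrict (Set.uIoc (-1:ℝ) 1)] f := by
    rw [huIoc]
    refine MeasureTheory.ae_restrict_of_forall_mem measurableSet_Ioc ?_
    intro x hx
    have h1 : (0:ℝ) ≤ 1 - x^2 := by nlinarith [hx.1, hx.2]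
    have h2 : (0:ℝ) ≤ (1 - x^2) ^ α := Real.rpow_nonneg h1 α
    positivity
  have hiff := intervalIntegral.integral_pos_iff_support_of_nonneg_ae' hae hfi
  have hroots : volume {x : ℝ | R.IsRoot x} = 0 :=
    (Polynomial.finite_setOf_isRoot hR).measure_zero _
  have hsub : Set.Ioo (-1:ℝ) 1 \ {x : ℝ | R.IsRoot x}
      ⊆ Function.support f ∩ Set.Ioc (-1) 1 := by
    rintro x ⟨hx, hroot⟩
    refine ⟨?_, hx.1, le_of_lt hx.2⟩
    have h1 : (0:ℝ) < 1 - x^2 := by nlinarith [hx.1, hx.2]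
    have h2 : (0:ℝ) < (1 - x^2) ^ α := Real.rpow_pos_of_pos h1 α
    have h3 : R.eval x ≠ 0 := hroot
    show f x ≠ 0
    have : 0 < f x := by rw [hf]; positivity
    exact ne_of_gt this
  have hpos : 0 < volume (Function.support f ∩ Set.Ioc (-1:ℝ) 1) := by
    refine lt_of_lt_of_le ?_ (measure_mono hsub)
    rw [measure_diff_null hroots, Real.volume_Ioo]
    norm_num
  have : 0 < ∫ x in (-1:ℝ)..1, f x := hiff.mpr ⟨by norm_num, hpos⟩
  rw [h] at this
  exact lt_irrefl 0 this

lemma stirling_lower (n : ℕ) (hn : 1 ≤ n) : Real.sqrt π ≤ stirlingSeq n := by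
  obtain ⟨k, rfl⟩ : ∃ k, n = k + 1 := ⟨n - 1, by omega⟩
  have ha : Antitone (stirlingSeq ∘ Nat.succ) := stirlingSeq'_antitone
  have ht : Filter.Tendsto (stirlingSeq ∘ Nat.succ) Filter.atTop (nhds (Real.sqrt π)) :=
    tendsto_stirlingSeq_sqrt_pi.comp (Filter.tendsto_add_atTop_nat 1)
  exact ha.le_of_tendsto ht k

lemma stirlingSeq_two : stirlingSeq 2 = Real.exp 1 ^ 2 / 4 := by
  rw [stirlingSeq]
  have h4 : Real.sqrt (2 * (2:ℕ) : ℝ) = 2 := by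
    rw [show (2 * (2:ℕ) : ℝ) = 2^2 by norm_num, Real.sqrt_sq (by norm_num)]
  rw [h4]
  have hE : Real.exp 1 ≠ 0 := (Real.exp_pos 1).ne'
  rw [Nat.factorial]
  field_simp
  ring

lemma stirling_upper (n : ℕ) (hn : 2 ≤ n) : stirlingSeq n ≤ Real.exp 1 ^ 2 / 4 := by
  obtain ⟨k, rfl⟩ : ∃ k, n = k + 1 := ⟨n - 1, by omega⟩
  have ha : Antitone (stirlingSeq ∘ Nat.succ) := stirlingSeq'_antitone
  have := ha (show 1 ≤ k by omega)
  simpa [stirlingSeq_two] using this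

lemma fact_sq_eq (n : ℕ) (hn : 1 ≤ n) :
    ((n.factorial:ℝ))^2 * Real.exp 1 ^ (2*n)
      = (stirlingSeq n)^2 * (2*(n:ℝ)) * (n:ℝ)^(2*n) := by
  set E := Real.exp 1 with hEdef
  have hE : 0 < E := Real.exp_pos 1
  have hM : (0:ℝ) < (n:ℝ) := by exact_mod_cast hn
  have hd : (0:ℝ) < Real.sqrt (2*(n:ℝ)) * ((n:ℝ)/E)^n := by positivity
  have hdef : stirlingSeq n * (Real.sqrt (2*(n:ℝ)) * ((n:ℝ)/E)^n) = (n.factorial:ℝ) := by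
    rw [stirlingSeq]
    exact div_mul_cancel₀ _ hd.ne'
  rw [← hdef, mul_pow, mul_pow, Real.sq_sqrt (by positivity : (0:ℝ) ≤ 2*(n:ℝ))]
  have key : (((n:ℝ)/E)^n)^2 * E^(2*n) = (n:ℝ)^(2*n) := by
    rw [← pow_mul, mul_comm n 2, div_pow]
    exact div_mul_cancel₀ _ (by positivity)
  linear_combination (stirlingSeq n ^ 2 * (2*(n:ℝ))) * key

lemma fact_sq_upper (m : ℕ) (hm : 2 ≤ m) :
    16 * Real.exp 1 ^ (2*m) * ((m.factorial:ℝ))^2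
      ≤ Real.exp 1 ^ 4 * (2*(m:ℝ)) * (m:ℝ)^(2*m) := by
  set E := Real.exp 1 with hEdef
  have h := fact_sq_eq m (by omega)
  have hs := stirling_upper m hm
  have hs0 : 0 ≤ stirlingSeq m := by
    obtain ⟨k, rfl⟩ : ∃ k, m = k + 1 := ⟨m - 1, by omega⟩
    exact (stirlingSeq'_pos k).le
  have hss : (stirlingSeq m)^2 ≤ (E^2/4)^2 := by
    have := mul_self_le_mul_self hs0 hs
    simpa [pow_two] using this
  have hpos : (0:ℝ) ≤ (2*(m:ℝ)) * (m:ℝ)^(2*m) := by positivity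
  calc 16 * E^(2*m) * ((m.factorial:ℝ))^2
      = 16 * ((stirlingSeq m)^2 * ((2*(m:ℝ)) * (m:ℝ)^(2*m))) := by
        rw [show (stirlingSeq m)^2 * ((2*(m:ℝ)) * (m:ℝ)^(2*m))
            = (stirlingSeq m)^2 * (2*(m:ℝ)) * (m:ℝ)^(2*m) by ring, ← h]; ring
    _ ≤ 16 * ((E^2/4)^2 * ((2*(m:ℝ)) * (m:ℝ)^(2*m))) := by
        have := mul_le_mul_of_nonneg_right hss hpos
        nlinarith [this]
    _ = E^4 * (2*(m:ℝ)) * (m:ℝ)^(2*m) := by ring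

lemma fact_sq_lower (m : ℕ) (hm : 1 ≤ m) :
    π * (4*(m:ℝ)) * (2*(m:ℝ))^(4*m) ≤ Real.exp 1 ^ (4*m) * (((2*m).factorial:ℝ))^2 := by
  have h := fact_sq_eq (2*m) (by omega)
  rw [show 2*(2*m) = 4*m by ring] at h
  push_cast at h
  have hs : Real.sqrt π ≤ stirlingSeq (2*m) := stirling_lower (2*m) (by omega)
  have hπ : π ≤ (stirlingSeq (2*m))^2 := by
    have h0 : 0 ≤ Real.sqrt π := Real.sqrt_nonneg π
    nlinarith [mul_self_le_mul_self h0 hs, Real.sq_sqrt Real.pi_pos.le]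
  have hpos : (0:ℝ) ≤ (2*(2*(m:ℝ))) * (2*(m:ℝ))^(4*m) := by positivity
  have := mul_le_mul_of_nonneg_right hπ hpos
  nlinarith [this, h]

lemma binom_exp (m : ℕ) (hm : 1 ≤ m) :
    (2*(m:ℝ)+1)^(2*m) ≤ Real.exp 1 * (2*(m:ℝ))^(2*m) := by
  have hM : (0:ℝ) < (m:ℝ) := by exact_mod_cast hm
  have h1 : (2*(m:ℝ)+1) = (2*(m:ℝ)) * (1 + 1/(2*(m:ℝ))) := by field_simp
  have h2 : (1 + 1/(2*(m:ℝ))) ≤ Real.exp (1/(2*(m:ℝ))) := by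
    have := Real.add_one_le_exp (1/(2*(m:ℝ)))
    linarith
  have h3 : (1 + 1/(2*(m:ℝ)))^(2*m) ≤ Real.exp (1/(2*(m:ℝ)))^(2*m) :=
    pow_le_pow_left₀ (by positivity) h2 (2*m)
  have h4 : Real.exp (1/(2*(m:ℝ)))^(2*m) = Real.exp 1 := by
    rw [← Real.exp_nat_mul]
    congr 1
    field_simp
    push_cast
    ring
  rw [h1, mul_pow]
  calc (2*(m:ℝ))^(2*m) * (1 + 1/(2*(m:ℝ)))^(2*m)
      ≤ (2*(m:ℝ))^(2*m) * Real.exp 1 := by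
        refine mul_le_mul_of_nonneg_left ?_ (by positivity)
        rw [← h4]; exact h3
    _ = Real.exp 1 * (2*(m:ℝ))^(2*m) := by ring

lemma exp_five_le : Real.exp 1 ^ 5 ≤ 16 * π^2 := by
  have h1 : Real.exp 1 ≤ 2.7182818286 := Real.exp_one_lt_d9.le
  have h0 : (0:ℝ) ≤ Real.exp 1 := (Real.exp_pos 1).le
  have h2 : Real.exp 1 ^ 5 ≤ 2.7182818286 ^ 5 := pow_le_pow_left₀ h0 h1 5
  have h3 : (3.141592 : ℝ) < π := Real.pi_gt_d6
  nlinarith [h2, h3]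

lemma key_ineq (m : ℕ) (hm : 1 ≤ m) :
    2 * 4^m * ((m.factorial:ℝ))^2 * (2*(m:ℝ)+1)^(2*m)
      ≤ π * Real.exp 1 ^ (2*m) * (((2*m).factorial:ℝ))^2 := by
  set E := Real.exp 1 with hEdef
  have hE : 0 < E := Real.exp_pos 1
  rcases eq_or_lt_of_le hm with h1 | h2
  · -- m = 1
    have hm1 : m = 1 := h1.symm
    subst hm1
    norm_num [Nat.factorial]
    -- 2 * 4 * 1 * 3^2 = 72 ≤ π * E^2 * 4
    have hE1 : (2.7182818283:ℝ) < E := Real.exp_one_gt_d9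
    have h3 : (3.141592 : ℝ) < π := Real.pi_gt_d6
    nlinarith [hE1, h3]
  · -- m ≥ 2
    have hm2 : 2 ≤ m := h2
    have hup := fact_sq_upper m hm2
    have hlo := fact_sq_lower m hm
    have hbin := binom_exp m hm
    have hnum : E^5 ≤ 16*π^2 := exp_five_le
    have hM : (0:ℝ) < (m:ℝ) := by exact_mod_cast hm
    have hfpos : (0:ℝ) < ((m.factorial:ℝ)) := by exact_mod_cast m.factorial_pos
    have h2fpos : (0:ℝ) < (((2*m).factorial:ℝ)) := by exact_mod_cast (2*m).factorial_pos
    -- chain: 16 E^{2m} * LHS ≤ 2*4^m*(E^4*2M*M^{2m})*(E*(2M)^{2m}) = 4M E^5 (2M)^{4m}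
    --        ≤ 4M*16π²(2M)^{4m} = 16π*(π*4M*(2M)^{4m}) ≤ 16π E^{4m} (2m)!²
    have hstep1 : 16 * E^(2*m) * (2 * 4^m * ((m.factorial:ℝ))^2 * (2*(m:ℝ)+1)^(2*m))
        ≤ (4*(m:ℝ)) * E^5 * (2*(m:ℝ))^(4*m) := by
      have e1 : 16 * E^(2*m) * (2 * 4^m * ((m.factorial:ℝ))^2 * (2*(m:ℝ)+1)^(2*m))
          = (2 * 4^m * (2*(m:ℝ)+1)^(2*m)) * (16 * E^(2*m) * ((m.factorial:ℝ))^2) := by ring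
      rw [e1]
      have s1 : (2 * 4^m * (2*(m:ℝ)+1)^(2*m)) * (16 * E^(2*m) * ((m.factorial:ℝ))^2)
          ≤ (2 * 4^m * (2*(m:ℝ)+1)^(2*m)) * (E^4 * (2*(m:ℝ)) * (m:ℝ)^(2*m)) := by
        refine mul_le_mul_of_nonneg_left hup (by positivity)
      refine s1.trans ?_
      have s2 : (2*(m:ℝ)+1)^(2*m) * (2 * 4^m * (E^4 * (2*(m:ℝ)) * (m:ℝ)^(2*m)))
          ≤ (E * (2*(m:ℝ))^(2*m)) * (2 * 4^m * (E^4 * (2*(m:ℝ)) * (m:ℝ)^(2*m))) :=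
        mul_le_mul_of_nonneg_right hbin (by positivity)
      have e2 : (2 * 4^m * (2*(m:ℝ)+1)^(2*m)) * (E^4 * (2*(m:ℝ)) * (m:ℝ)^(2*m))
          = (2*(m:ℝ)+1)^(2*m) * (2 * 4^m * (E^4 * (2*(m:ℝ)) * (m:ℝ)^(2*m))) := by ring
      rw [e2]
      refine s2.trans ?_
      have e3 : (4:ℝ)^m * (m:ℝ)^(2*m) = (2*(m:ℝ))^(2*m) := by
        rw [mul_pow]
        congr 1
        rw [show (4:ℝ) = 2^2 by norm_num, ← pow_mul]
      have e4 : (2*(m:ℝ))^(2*m) * (2*(m:ℝ))^(2*m) = (2*(m:ℝ))^(4*m) := by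
        rw [← pow_add]
        congr 1
        omega
      have e6 : (E * (2*(m:ℝ))^(2*m)) * (2 * 4^m * (E^4 * (2*(m:ℝ)) * (m:ℝ)^(2*m)))
          = (4*(m:ℝ)) * E^5 * (2*(m:ℝ))^(4*m) := by
        calc (E * (2*(m:ℝ))^(2*m)) * (2 * 4^m * (E^4 * (2*(m:ℝ)) * (m:ℝ)^(2*m)))
            = E^5 * (4*(m:ℝ)) * ((4^m * (m:ℝ)^(2*m)) * (2*(m:ℝ))^(2*m)) := by ring
          _ = E^5 * (4*(m:ℝ)) * ((2*(m:ℝ))^(2*m) * (2*(m:ℝ))^(2*m)) := by rw [e3]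
          _ = (4*(m:ℝ)) * E^5 * (2*(m:ℝ))^(4*m) := by rw [e4]; ring
      exact le_of_eq e6
    have hstep2 : (4*(m:ℝ)) * E^5 * (2*(m:ℝ))^(4*m)
        ≤ 16*π * (E^(4*m) * (((2*m).factorial:ℝ))^2) := by
      have s3 : (4*(m:ℝ)) * E^5 * (2*(m:ℝ))^(4*m)
          ≤ (4*(m:ℝ)) * (16*π^2) * (2*(m:ℝ))^(4*m) := by
        have := mul_le_mul_of_nonneg_right
          (mul_le_mul_of_nonneg_left hnum (by positivity : (0:ℝ) ≤ 4*(m:ℝ)))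
          (by positivity : (0:ℝ) ≤ (2*(m:ℝ))^(4*m))
        linarith [this]
      refine s3.trans ?_
      have e5 : (4*(m:ℝ)) * (16*π^2) * (2*(m:ℝ))^(4*m)
          = 16*π * (π * (4*(m:ℝ)) * (2*(m:ℝ))^(4*m)) := by ring
      rw [e5]
      exact mul_le_mul_of_nonneg_left hlo (by positivity)
    have hcomb := hstep1.trans hstep2
    -- divide by 16 E^{2m}
    have h16 : (0:ℝ) < 16 * E^(2*m) := by positivity
    rw [show 16*π * (E^(4*m) * (((2*m).factorial:ℝ))^2)
        = 16 * E^(2*m) * (π * E^(2*m) * (((2*m).factorial:ℝ))^2) by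
      rw [show 4*m = 2*m + 2*m by ring, pow_add]; ring] at hcomb
    exact le_of_mul_le_mul_left hcomb h16


end EJ

open EJ Polynomial Finset

set_option maxHeartbeats 2000000 in
/-- Bound for the inner product of `e^{ikπx}` with the normalized Jacobi polynomial
`P̃_m^{(α,α)}` in `L²([-1,1],(1-x²)^α dx)`: for `m ≥ 1` and `k ≥ 0`,
`|⟨e^{ikπx}, P̃_m^{(α,α)}⟩| ≤ √(π/(2m+1)) (kπe/(2m+1))^m`.  The polynomial `P` is
characterized (up to sign, irrelevant for the conclusion) by degree `m`, orthogonality to all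
lower-degree polynomials and unit norm in the weighted space. -/
theorem exp_jacobi_inner_bound (α : ℝ) (hα : 0 ≤ α) (m k : ℕ) (hm : 1 ≤ m)
    (P : Polynomial ℝ)
    (hdeg : P.natDegree = m)
    (horth : ∀ Q : Polynomial ℝ, Q.natDegree < m →
      (∫ x in (-1 : ℝ)..1, P.eval x * Q.eval x * (1 - x ^ 2) ^ α) = 0)
    (hnorm : (∫ x in (-1 : ℝ)..1, (P.eval x) ^ 2 * (1 - x ^ 2) ^ α) = 1) :
    ‖∫ x in (-1 : ℝ)..1, Complex.exp (Complex.I * ((k : ℝ) * π * x)) * (↑(P.eval x) : ℂ) *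
        (((1 - x ^ 2) ^ α : ℝ) : ℂ)‖
      ≤ Real.sqrt (π / (2 * (m : ℝ) + 1)) *
        ((k : ℝ) * π * Real.exp 1 / (2 * (m : ℝ) + 1)) ^ m := by
  set γ : ℝ := α + m with hγdef
  set lam : ℝ := (k:ℝ) * π with hlamdef
  have hlam : 0 ≤ lam := by positivity
  have hγ : (m:ℝ) ≤ γ := by rw [hγdef]; linarith
  have hMpos : (0:ℝ) < (m:ℝ) := by exact_mod_cast hm
  set E : ℝ := Real.exp 1 with hEdef
  have hE : 0 < E := Real.exp_pos 1
  -- the product Π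
  set Pi : ℝ := ∏ i ∈ range m, (2*γ - i) with hPidef
  have hfac : ∀ i ∈ range m, ((2*m - i:ℕ):ℝ) ≤ 2*γ - i ∧ (0:ℝ) < 2*γ - i := by
    intro i hi
    simp only [mem_range] at hi
    have hcast : ((2*m - i:ℕ):ℝ) = 2*(m:ℝ) - i := by
      have : i ≤ 2*m := by omega
      push_cast [Nat.cast_sub this]
      ring
    have hile : (i:ℝ) < (m:ℝ) := by exact_mod_cast hi
    constructor
    · rw [hcast, hγdef]; linarith
    · rw [hγdef]; linarith
  have hPipos : 0 < Pi := by
    rw [hPidef]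
    exact Finset.prod_pos (fun i hi => (hfac i hi).2)
  have hPige : (((2*m).descFactorial m : ℕ):ℝ) ≤ Pi := by
    rw [Nat.descFactorial_eq_prod_range, Nat.cast_prod, hPidef]
    exact Finset.prod_le_prod (fun i _ => by positivity) (fun i hi => (hfac i hi).1)
  have hdf : (m.factorial : ℝ) * (((2*m).descFactorial m : ℕ):ℝ) = ((2*m).factorial : ℝ) := by
    have := Nat.factorial_mul_descFactorial (show m ≤ 2*m by omega)
    rw [show 2*m - m = m by omega] at this
    exact_mod_cast this
  have hfact_le : ((2*m).factorial : ℝ) ≤ (m.factorial:ℝ) * Pi := by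
    rw [← hdf]
    exact mul_le_mul_of_nonneg_left hPige (by positivity)
  -- leading coefficient
  have hlm : l γ m = (-1:ℝ)^m * Pi := l_eq γ m
  have hlm_ne : l γ m ≠ 0 := by
    rw [hlm]
    have : ((-1:ℝ)^m) ≠ 0 := by
      rcases Nat.even_or_odd m with he | ho
      · rw [he.neg_one_pow]; norm_num
      · rw [ho.neg_one_pow]; norm_num
    positivity
  -- h at level m is the weight times Q m
  have hhm : ∀ x : ℝ, h γ m x = (1 - x^2)^α * (Q γ m).eval x := by
    intro x
    rw [EJ.h]
    congr 2
    rw [hγdef]; ring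
  -- orthogonality of Q m
  have horthQ : ∀ S : Polynomial ℝ, S.natDegree < m →
      (∫ x in (-1:ℝ)..1, S.eval x * h γ m x) = 0 := by
    intro S hS
    rw [poly_hn γ m hγ m le_rfl S, Polynomial.iterate_derivative_eq_zero hS]
    simp
  -- continuity facts
  have hwc : Continuous (fun x : ℝ => (1-x^2)^α) :=
    (Real.continuous_rpow_const hα).comp (by continuity)
  have hhmc : Continuous (h γ m) := continuous_h γ m (by rw [hγdef]; push_cast; linarith)
  have hh0c : Continuous (h γ 0) := continuous_h γ 0 (by rw [hγdef]; push_cast; linarith)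
  -- uniqueness: P = C c * Q γ m
  set c : ℝ := P.leadingCoeff / l γ m with hcdef
  set R : Polynomial ℝ := P - C c * Q γ m with hRdef
  have hPm : P.coeff m = P.leadingCoeff := by rw [← hdeg]; rfl
  have hcoeffR : R.coeff m = 0 := by
    rw [hRdef, coeff_sub, coeff_C_mul, coeff_Q, hPm, hcdef, div_mul_cancel₀ _ hlm_ne, sub_self]
  have hRdegle : R.natDegree ≤ m - 1 := by
    refine natDegree_le_iff_coeff_eq_zero.mpr (fun N hN => ?_)
    rcases eq_or_lt_of_le (show m ≤ N by omega) with hNm | hNm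
    · rw [← hNm]; exact hcoeffR
    · rw [hRdef, coeff_sub, coeff_C_mul]
      rw [coeff_eq_zero_of_natDegree_lt (by omega : P.natDegree < N),
        coeff_eq_zero_of_natDegree_lt (lt_of_le_of_lt (natDegree_Q γ m) hNm)]
      ring
  have hRdeg : R.natDegree < m := by omega
  have hRzero : R = 0 := by
    refine eq_zero_of_integral_sq α hα R ?_
    have e1 : ∀ x : ℝ, (R.eval x)^2 * (1 - x^2)^α
        = P.eval x * R.eval x * (1 - x^2)^α - c * (R.eval x * h γ m x) := by
      intro x
      rw [hhm, hRdef]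
      simp only [eval_sub, eval_mul, eval_C]
      ring
    have hi1 : IntervalIntegrable (fun x : ℝ => P.eval x * R.eval x * (1 - x^2)^α) volume (-1) 1 :=
      (((P.continuous.mul R.continuous).mul hwc)).intervalIntegrable _ _
    have hi2 : IntervalIntegrable (fun x : ℝ => R.eval x * h γ m x) volume (-1) 1 :=
      (R.continuous.mul hhmc).intervalIntegrable _ _
    calc (∫ x in (-1:ℝ)..1, (R.eval x)^2 * (1 - x^2)^α)
        = ∫ x in (-1:ℝ)..1,
            (P.eval x * R.eval x * (1 - x^2)^α - c * (R.eval x * h γ m x)) := by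
          simp only [e1]
      _ = (∫ x in (-1:ℝ)..1, P.eval x * R.eval x * (1 - x^2)^α)
            - c * ∫ x in (-1:ℝ)..1, R.eval x * h γ m x := by
          rw [intervalIntegral.integral_sub hi1 (hi2.const_mul c),
            intervalIntegral.integral_const_mul]
      _ = 0 := by rw [horth R hRdeg, horthQ R hRdeg]; ring
  have hP : P = C c * Q γ m := by
    have := sub_eq_zero.mp (hRdef ▸ hRzero)
    exact this
  -- A and the norm equation
  set A : ℝ := ∫ x in (-1:ℝ)..1, h γ 0 x with hAdef
  have hQnorm : (∫ x in (-1:ℝ)..1, (Q γ m).eval x * h γ m x)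
      = (-1:ℝ)^m * ((m.factorial:ℝ) * l γ m) * A := by
    rw [poly_hn γ m hγ m le_rfl (Q γ m),
      iterate_derivative_of_natDegree_le m _ (natDegree_Q γ m), coeff_Q]
    simp only [eval_C]
    rw [intervalIntegral.integral_const_mul, hAdef]
    ring
  have heq1 : 1 = c^2 * ((m.factorial:ℝ) * Pi * A) := by
    have e2 : ∀ x : ℝ, (P.eval x)^2 * (1 - x^2)^α = c^2 * ((Q γ m).eval x * h γ m x) := by
      intro x
      rw [hP, hhm]
      simp only [eval_mul, eval_C]
      ring
    have : (∫ x in (-1:ℝ)..1, (P.eval x)^2 * (1 - x^2)^α)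
        = c^2 * ∫ x in (-1:ℝ)..1, (Q γ m).eval x * h γ m x := by
      simp only [e2]
      rw [intervalIntegral.integral_const_mul]
    rw [hnorm] at this
    rw [this, hQnorm, hlm]
    have hs : ((-1:ℝ)^m) * ((-1:ℝ)^m) = 1 := by
      rw [← pow_add]
      exact (Even.add_self m).neg_one_pow
    calc c^2 * ((-1:ℝ)^m * ((m.factorial:ℝ) * ((-1:ℝ)^m * Pi)) * A)
        = (((-1:ℝ)^m) * ((-1:ℝ)^m)) * (c^2 * ((m.factorial:ℝ) * Pi * A)) := by ring
      _ = c^2 * ((m.factorial:ℝ) * Pi * A) := by rw [hs]; ring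
  have hAnonneg : 0 ≤ A := by
    rw [hAdef]
    refine intervalIntegral.integral_nonneg (by norm_num) (fun x hx => ?_)
    rw [EJ.h]
    have h1 : (0:ℝ) ≤ 1 - x^2 := by
      rcases hx with ⟨hx1, hx2⟩
      have := mul_nonneg (by linarith : (0:ℝ) ≤ 1 - x) (by linarith : (0:ℝ) ≤ 1 + x)
      linarith
    have : (0:ℝ) ≤ (1 - x^2) ^ (γ - ((0:ℕ):ℝ)) := Real.rpow_nonneg h1 _
    have hq0 : (Q γ 0) = 1 := rfl
    rw [hq0]
    simpa using this
  have hApos : 0 < A := by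
    rcases eq_or_lt_of_le hAnonneg with hA0 | hApos
    · exfalso
      rw [← hA0] at heq1
      norm_num at heq1
    · exact hApos
  have hfactpos : (0:ℝ) < (m.factorial:ℝ) := by exact_mod_cast m.factorial_pos
  have hcne : c ≠ 0 := by
    intro hc0
    rw [hc0] at heq1
    norm_num at heq1
  have hc2 : c^2 = 1 / ((m.factorial:ℝ) * Pi * A) := by
    field_simp at heq1 ⊢
    linarith [heq1]
  -- bound A by J m
  have hA_le : A ≤ 2^(2*m+1) * ((m.factorial:ℝ))^2 / (((2*m+1).factorial:ℝ)) := by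
    rw [← J_formula m, hAdef]
    refine intervalIntegral.integral_mono_on (by norm_num)
      (hh0c.intervalIntegrable _ _)
      (((continuous_const.sub (continuous_pow 2)).pow m).intervalIntegrable _ _) (fun x hx => ?_)
    rcases hx with ⟨hx1, hx2⟩
    have h1 : (0:ℝ) ≤ 1 - x^2 := by
      have := mul_nonneg (by linarith : (0:ℝ) ≤ 1 - x) (by linarith : (0:ℝ) ≤ 1 + x)
      linarith
    have hq0 : (Q γ 0) = 1 := rfl
    rw [EJ.h, hq0]
    simp only [eval_one, mul_one, Nat.cast_zero, sub_zero]
    rcases eq_or_lt_of_le h1 with h0 | h0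
    · rw [← h0, Real.zero_rpow (by rw [hγdef]; positivity), zero_pow (by omega)]
    · have h2 : (1 - x^2) ≤ 1 := by nlinarith
      have := Real.rpow_le_rpow_of_exponent_ge h0 h2 hγ
      rw [Real.rpow_natCast] at this
      exact this
  -- identify the integral
  have hh0nonneg : ∀ x ∈ Set.Icc (-1:ℝ) 1, 0 ≤ h γ 0 x := by
    intro x hx
    rcases hx with ⟨hx1, hx2⟩
    have h1 : (0:ℝ) ≤ 1 - x^2 := by
      have := mul_nonneg (by linarith : (0:ℝ) ≤ 1 - x) (by linarith : (0:ℝ) ≤ 1 + x)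
      linarith
    have hq0 : (Q γ 0) = 1 := rfl
    rw [EJ.h, hq0]
    have : (0:ℝ) ≤ (1 - x^2) ^ (γ - ((0:ℕ):ℝ)) := Real.rpow_nonneg h1 _
    simpa using this
  have hIeq : (∫ x in (-1:ℝ)..1, Complex.exp (Complex.I * ((k : ℝ) * π * x)) * (↑(P.eval x) : ℂ) *
        (((1 - x ^ 2) ^ α : ℝ) : ℂ))
      = (c:ℂ) * ((-(Complex.I*(lam:ℝ)))^m * ∫ x in (-1:ℝ)..1, F lam x * ((h γ 0 x : ℝ) : ℂ)) := by
    have e3 : ∀ x : ℝ, Complex.exp (Complex.I * ((k : ℝ) * π * x)) * (↑(P.eval x) : ℂ) *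
        (((1 - x ^ 2) ^ α : ℝ) : ℂ) = (c:ℂ) * (F lam x * ((h γ m x : ℝ) : ℂ)) := by
      intro x
      rw [hP, hhm]
      simp only [eval_mul, eval_C, EJ.F, hlamdef]
      push_cast
      ring
    simp only [e3]
    rw [intervalIntegral.integral_const_mul, F_hn γ lam m hγ m le_rfl]
  rw [hIeq]
  have hnFh0 : ‖∫ x in (-1:ℝ)..1, F lam x * ((h γ 0 x : ℝ) : ℂ)‖ ≤ A := by
    refine (intervalIntegral.norm_integral_le_integral_norm (by norm_num)).trans ?_
    rw [hAdef]
    refine intervalIntegral.integral_mono_on (by norm_num) ?_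
      (hh0c.intervalIntegrable _ _) (fun x hx => ?_)
    · exact (((continuous_F lam).mul (Complex.continuous_ofReal.comp hh0c)).norm).intervalIntegrable _ _
    · have hnorm1 : ‖F lam x * ((h γ 0 x:ℝ):ℂ)‖ = |h γ 0 x| := by
        rw [norm_mul]
        have hF1 : ‖F lam x‖ = 1 := by
          rw [EJ.F, Complex.norm_exp]
          simp
        rw [hF1, one_mul, Complex.norm_real, Real.norm_eq_abs]
      rw [hnorm1, abs_of_nonneg (hh0nonneg x hx)]
  have hnormLHS : ‖(c:ℂ) * ((-(Complex.I*(lam:ℝ)))^m * ∫ x in (-1:ℝ)..1, F lam x * ((h γ 0 x : ℝ) : ℂ))‖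
      = |c| * lam^m * ‖∫ x in (-1:ℝ)..1, F lam x * ((h γ 0 x : ℝ) : ℂ)‖ := by
    rw [norm_mul, norm_mul, norm_pow]
    have h1 : ‖(c:ℂ)‖ = |c| := by rw [Complex.norm_real, Real.norm_eq_abs]
    have h2 : ‖-(Complex.I*(lam:ℝ))‖ = lam := by
      rw [norm_neg, norm_mul, Complex.norm_I, one_mul, Complex.norm_real,
        Real.norm_eq_abs, abs_of_nonneg hlam]
    rw [h1, h2]
    ring
  rw [hnormLHS]
  have hBle : |c| * lam^m * ‖∫ x in (-1:ℝ)..1, F lam x * ((h γ 0 x : ℝ) : ℂ)‖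
      ≤ |c| * lam^m * A := mul_le_mul_of_nonneg_left hnFh0 (by positivity)
  refine hBle.trans ?_
  -- final arithmetic
  have hRHSnonneg : 0 ≤ Real.sqrt (π/(2*(m:ℝ)+1)) * (lam*E/(2*(m:ℝ)+1))^m := by positivity
  have hBnonneg : 0 ≤ |c| * lam^m * A := by positivity
  have hsq : (|c| * lam^m * A)^2 ≤ (Real.sqrt (π/(2*(m:ℝ)+1)) * (lam*E/(2*(m:ℝ)+1))^m)^2 := by
    have hB2 : (|c| * lam^m * A)^2 = lam^(2*m) * (A / ((m.factorial:ℝ) * Pi)) := by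
      rw [mul_pow, mul_pow, sq_abs, hc2, ← pow_mul, mul_comm m 2]
      field_simp
    have hRHS2 : (Real.sqrt (π/(2*(m:ℝ)+1)) * (lam*E/(2*(m:ℝ)+1))^m)^2
        = (π/(2*(m:ℝ)+1)) * ((lam*E/(2*(m:ℝ)+1))^(2*m)) := by
      rw [mul_pow, Real.sq_sqrt (by positivity), ← pow_mul, mul_comm m 2]
    have hre : (π/(2*(m:ℝ)+1)) * ((lam*E/(2*(m:ℝ)+1))^(2*m))
        = lam^(2*m) * (π * E^(2*m) / (2*(m:ℝ)+1)^(2*m+1)) := by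
      rw [div_pow, mul_pow, pow_succ]
      field_simp
    rw [hB2, hRHS2, hre]
    refine mul_le_mul_of_nonneg_left ?_ (by positivity)
    have hstep1 : A / ((m.factorial:ℝ) * Pi)
        ≤ (2^(2*m+1) * ((m.factorial:ℝ))^2 / (((2*m+1).factorial:ℝ))) / (((2*m).factorial:ℝ)) :=
      div_le_div₀ (by positivity) hA_le (by exact_mod_cast (2*m).factorial_pos) hfact_le
    refine hstep1.trans ?_
    rw [div_le_div_iff₀ (by positivity) (by positivity)]
    have hfs : ((2*m+1).factorial : ℝ) = (2*(m:ℝ)+1) * ((2*m).factorial:ℝ) := by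
      rw [show 2*m+1 = (2*m)+1 from rfl, Nat.factorial_succ]
      push_cast
      ring
    have hkey := key_ineq m hm
    have hmul := mul_le_mul_of_nonneg_right hkey (by positivity : (0:ℝ) ≤ 2*(m:ℝ)+1)
    have e4 : (2:ℝ)^(2*m+1) = 2 * 4^m := by
      rw [pow_succ, pow_mul]
      norm_num
      ring
    have hffpos : (0:ℝ) < ((2*m+1).factorial : ℝ) := by exact_mod_cast (2*m+1).factorial_pos
    -- goal: (2^(2m+1)*(m!)^2/((2m+1)!)) * (2*(m:ℝ)+1)^(2*m+1) ≤ π*E^(2*m)/(2m+1)^(2m+1) ... 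
    rw [div_mul_eq_mul_div, div_le_iff₀ hffpos]
    calc 2^(2*m+1) * ((m.factorial:ℝ))^2 * (2*(m:ℝ)+1)^(2*m+1)
        = (2 * 4^m * ((m.factorial:ℝ))^2 * (2*(m:ℝ)+1)^(2*m)) * (2*(m:ℝ)+1) := by
          rw [e4, pow_succ]
          ring
      _ ≤ (π * E^(2*m) * (((2*m).factorial:ℝ))^2) * (2*(m:ℝ)+1) := hmul
      _ = π * E^(2*m) * (((2*m).factorial:ℝ)) * ((2*m+1).factorial : ℝ) := by
          rw [hfs]
          ring
  have hfin := Real.sqrt_le_sqrt hsq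
  rwa [Real.sqrt_sq hBnonneg, Real.sqrt_sq hRHSnonneg] at hfin
end

section
/- Let c ≥ 1, α > 0, and let β_k^n denote the coefficients of the expansion ψ_{n,c}^{(α)} = ∑_k β_k^n P̃_k^{(α,α)} in normalized Jacobi polynomials. Suppose for all n, k with k ≤ n/1.9 and q = c²/χ_n^α(c) < 1 the bound |β_k^n| ≤ C_α (2√(χ_n^α(c))/c)^k |μ_n^α(c)| holds, together with χ_n^α(c) ≤ n(n+2α+1)+c² and the eigenvalue bound |μ_n^α(c)| ≤ (k_α/(c^{α/2+1} log((2n-1)/(ec)))) (ec/(2n-1))^{n+α/2}. Then there exist constants δ > 0 and C_{c,α} > 0 such that for all integers n ≥ m_α c with m_α = 4.13·(1.28 + (2α+1)/1.9)^{0.55} and all k ≤ n/1.9, |β_k^n| ≤ C_{c,α} e^{-δn}. -/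
/-!
For `n ≥ 4c` the hypotheses give `√χ_n ≤ (2α+3) n` and `|μ_n| ≤ K (ec/n)^n`, so
`|β_k^n| ≤ C (2(2α+3) n/c)^{n/1.9} (ec/n)^n = C exp (n (G - (1 - 1/1.9) log (n/c)))`
for a constant `G`. The logarithm eventually beats `G + 1`, so `n (G + 1 - (1 - 1/1.9) log (n/c))`
is bounded above on `n ≥ c`, which is decay like `e^{-n}`.
-/

open Real

theorem exists_mul_sub_mul_log_div_le (G : ℝ) {b c : ℝ} (hb : 0 < b) (hc : 0 < c) :
    ∃ M, ∀ x, c ≤ x → x * (G - b * log (x / c)) ≤ M := by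
  refine ⟨c * exp (G / b) * |G|, fun x hx => ?_⟩
  have hx0 : 0 < x := hc.trans_le hx
  have hs : 0 ≤ log (x / c) := log_nonneg ((one_le_div hc).mpr hx)
  rcases le_or_gt G (b * log (x / c)) with hG | hG
  · exact (mul_nonpos_of_nonneg_of_nonpos hx0.le (by linarith)).trans (by positivity)
  · have hxN : x ≤ c * exp (G / b) := by
      have hlog : log (x / c) ≤ G / b := by rw [le_div_iff₀ hb]; linarith
      have hexp := (log_le_iff_le_exp (div_pos hx0 hc)).mp hlog
      rwa [div_le_iff₀ hc, mul_comm] at hexp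
    calc x * (G - b * log (x / c)) ≤ x * |G| := by
          gcongr
          linarith [le_abs_self G, mul_nonneg hb.le hs]
      _ ≤ c * exp (G / b) * |G| := by gcongr

theorem exists_rpow_mul_rpow_le_mul_exp_neg {A c p : ℝ} (hA : 0 < A) (hc : 0 < c) (hp : p < 1) :
    ∃ C > 0, ∀ x, c ≤ x →
      (A * (x / c)) ^ (p * x) * (exp 1 * c / x) ^ x ≤ C * exp (-x) := by
  obtain ⟨M, hM⟩ := exists_mul_sub_mul_log_div_le (p * log A + 2) (sub_pos.mpr hp) hc
  refine ⟨exp M, exp_pos M, fun x hx => ?_⟩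
  have hx0 : 0 < x := hc.trans_le hx
  have hlog₁ : log (A * (x / c)) = log A + log (x / c) :=
    log_mul hA.ne' (div_pos hx0 hc).ne'
  have hlog₂ : log (exp 1 * c / x) = 1 - log (x / c) := by
    rw [show exp 1 * c / x = exp 1 / (x / c) by field_simp, log_div (exp_pos 1).ne'
      (div_pos hx0 hc).ne', log_exp]
  rw [rpow_def_of_pos (by positivity), rpow_def_of_pos (by positivity), ← exp_add, ← exp_add,
    exp_le_exp, hlog₁, hlog₂]
  linarith [hM x hx]

theorem pow_le_rpow_of_one_le_of_le {y z t : ℝ} {k : ℕ} (hy : 1 ≤ y) (hyz : y ≤ z)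
    (hk : (k : ℝ) ≤ t) : y ^ k ≤ z ^ t := by
  rw [← rpow_natCast]
  exact (rpow_le_rpow_of_exponent_le hy hk).trans
    (rpow_le_rpow (zero_le_one.trans hy) hyz ((Nat.cast_nonneg k).trans hk))

theorem sqrt_le_of_le_mul_add_add_sq {χ a c x : ℝ} (ha : 0 ≤ a) (hc : 0 ≤ c) (hcx : c ≤ x)
    (hx : 1 ≤ x) (hχ : χ ≤ x * (x + a) + c ^ 2) : √χ ≤ (a + 2) * x := by
  rw [sqrt_le_left (by positivity)]
  nlinarith [mul_le_mul hcx hcx hc (hc.trans hcx), mul_le_mul_of_nonneg_left hx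
    (mul_nonneg ha (zero_le_one.trans hx))]

theorem div_mul_rpow_le_of_four_mul_le {K c γ x : ℝ} (hK : 0 ≤ K) (hc : 1 ≤ c)
    (hγ : 0 ≤ γ) (hx : 4 * c ≤ x) :
    K / (c ^ (γ + 1) * log ((2 * x - 1) / (exp 1 * c))) * (exp 1 * c / (2 * x - 1)) ^ (x + γ)
      ≤ K / log 2 * (exp 1 * c / x) ^ x := by
  have hec : 0 < exp 1 * c := by positivity
  have hx0 : 0 < x := by linarith
  have h2x : 2 * exp 1 * c ≤ 2 * x - 1 := by nlinarith [exp_one_lt_three]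
  have hlog : log 2 ≤ log ((2 * x - 1) / (exp 1 * c)) :=
    log_le_log two_pos (by rw [le_div_iff₀ hec]; linarith)
  have hden : log 2 ≤ c ^ (γ + 1) * log ((2 * x - 1) / (exp 1 * c)) :=
    hlog.trans (le_mul_of_one_le_left ((log_pos one_lt_two).le.trans hlog)
      (one_le_rpow hc (by linarith)))
  have hpow : (exp 1 * c / (2 * x - 1)) ^ (x + γ) ≤ (exp 1 * c / x) ^ x :=
    calc (exp 1 * c / (2 * x - 1)) ^ (x + γ) ≤ (exp 1 * c / (2 * x - 1)) ^ x :=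
          rpow_le_rpow_of_exponent_ge (div_pos hec (by linarith))
            ((div_le_one (by linarith)).mpr (by linarith)) (by linarith)
      _ ≤ (exp 1 * c / x) ^ x :=
          rpow_le_rpow (div_pos hec (by linarith)).le
            (div_le_div_of_nonneg_left hec.le hx0 (by linarith)) hx0.le
  exact mul_le_mul (div_le_div_of_nonneg_left hK (log_pos one_lt_two) hden) hpow
    (rpow_nonneg (div_pos hec (by linarith)).le _) (div_nonneg hK (log_pos one_lt_two).le)

theorem four_le_threshold {α : ℝ} (hα : 0 ≤ α) :
    4 ≤ 4.13 * (1.28 + (2 * α + 1) / 1.9) ^ (0.55 : ℝ) := by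
  have hbase : (1 : ℝ) ≤ 1.28 + (2 * α + 1) / 1.9 := by
    linarith [div_nonneg (by linarith : (0 : ℝ) ≤ 2 * α + 1) (by norm_num : (0 : ℝ) ≤ 1.9)]
  linarith [one_le_rpow hbase (by norm_num : (0 : ℝ) ≤ 0.55)]

/-- Super-exponential smallness of the low-order Jacobi coefficients `β_k^n` of the GPSWFs:
assuming the coefficient bound `|β_k^n| ≤ C_α (2√(χ_n)/c)^k |μ_n|` for `k ≤ n/1.9` and
`q = c²/χ_n < 1`, the eigenvalue bounds `n(n+2α+1) ≤ χ_n ≤ n(n+2α+1)+c²`, and the decay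
`|μ_n| ≤ (k_α/(c^{α/2+1} log((2n-1)/(ec)))) (ec/(2n-1))^{n+α/2}` for `n > (ec+1)/2`,
there exist `δ > 0` and `C_{c,α} > 0` such that `|β_k^n| ≤ C_{c,α} e^{-δn}` for all
`n ≥ m_α c` with `m_α = 4.13 (1.28+(2α+1)/1.9)^{0.55}` and all `k ≤ n/1.9`. -/
theorem jacobi_coefficient_decay (c α : ℝ) (hc : 1 ≤ c) (hα : 0 < α)
    (β : ℕ → ℕ → ℝ) (χ : ℕ → ℝ) (μ : ℕ → ℂ)
    (hβ : ∀ n k : ℕ, (k : ℝ) ≤ (n : ℝ) / 1.9 → c ^ 2 / χ n < 1 →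
      |β k n| ≤ 2 ^ α * (3/2 : ℝ) ^ ((3 : ℝ)/4) * (3/2 + 2 * α) ^ ((3 : ℝ)/4 + α) /
          Real.exp 1 ^ (2 * α + 3/2) *
        (2 * Real.sqrt (χ n) / c) ^ k * ‖μ n‖)
    (hχlow : ∀ n : ℕ, (n : ℝ) * ((n : ℝ) + 2 * α + 1) ≤ χ n)
    (hχup : ∀ n : ℕ, χ n ≤ (n : ℝ) * ((n : ℝ) + 2 * α + 1) + c ^ 2)
    (hμ : ∀ n : ℕ, (Real.exp 1 * c + 1) / 2 < (n : ℝ) →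
      ‖μ n‖ ≤ (2 / Real.exp 1) ^ (1 + α / 2) * π * Real.sqrt (Real.Gamma (α + 1)) /
          (c ^ (α / 2 + 1) * Real.log ((2 * (n : ℝ) - 1) / (Real.exp 1 * c))) *
          (Real.exp 1 * c / (2 * (n : ℝ) - 1)) ^ ((n : ℝ) + α / 2)) :
    ∃ δ > (0 : ℝ), ∃ C > (0 : ℝ), ∀ n k : ℕ,
      4.13 * (1.28 + (2 * α + 1) / 1.9) ^ ((0.55 : ℝ)) * c ≤ (n : ℝ) →
      (k : ℝ) ≤ (n : ℝ) / 1.9 →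
      |β k n| ≤ C * Real.exp (-δ * (n : ℝ)) := by
  set Cα : ℝ := 2 ^ α * (3/2 : ℝ) ^ ((3 : ℝ)/4) * (3/2 + 2 * α) ^ ((3 : ℝ)/4 + α) /
    Real.exp 1 ^ (2 * α + 3/2)
  set K : ℝ := (2 / Real.exp 1) ^ (1 + α / 2) * π * Real.sqrt (Real.Gamma (α + 1))
  have hK : 0 < K := by have := Real.Gamma_pos_of_pos (by linarith : 0 < α + 1); positivity
  have hc0 : 0 < c := by linarith
  obtain ⟨C₀, hC₀, hdecay⟩ := exists_rpow_mul_rpow_le_mul_exp_neg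
    (by positivity : 0 < 2 * ((2 * α + 1) + 2)) hc0 (by norm_num : (1 / 1.9 : ℝ) < 1)
  refine ⟨1, one_pos, Cα * (K / log 2) * C₀, by positivity, fun n k hn hk => ?_⟩
  have hcn : 4 * c ≤ n := le_trans (by gcongr; exact four_le_threshold hα.le) hn
  have hχ : (n : ℝ) ^ 2 ≤ χ n := by nlinarith [hχlow n]
  have hq : c ^ 2 / χ n < 1 := by
    rw [div_lt_one (by nlinarith)]; nlinarith
  have hX₁ : 1 ≤ 2 * √(χ n) / c := by
    rw [le_div_iff₀ hc0, one_mul]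
    nlinarith [Real.le_sqrt_of_sq_le hχ]
  have hX₂ : 2 * √(χ n) / c ≤ 2 * ((2 * α + 1) + 2) * (n / c) := by
    rw [mul_div_assoc', mul_assoc]
    gcongr
    exact sqrt_le_of_le_mul_add_add_sq (by linarith) hc0.le (by linarith) (by linarith)
      ((hχup n).trans_eq (by ring))
  calc |β k n| ≤ Cα * (2 * √(χ n) / c) ^ k * ‖μ n‖ := hβ n k hk hq
    _ ≤ Cα * (2 * ((2 * α + 1) + 2) * (n / c)) ^ (1 / 1.9 * (n : ℝ)) *
        (K / log 2 * (exp 1 * c / n) ^ (n : ℝ)) := by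
      gcongr
      · exact pow_le_rpow_of_one_le_of_le hX₁ hX₂ (hk.trans_eq (by ring))
      · exact (hμ n (by linarith [mul_lt_mul_of_pos_right exp_one_lt_three hc0])).trans
          (div_mul_rpow_le_of_four_mul_le hK.le hc (by positivity) hcn)
    _ = Cα * (K / log 2) * ((2 * ((2 * α + 1) + 2) * (n / c)) ^ (1 / 1.9 * (n : ℝ)) *
        (exp 1 * c / n) ^ (n : ℝ)) := by ring
    _ ≤ Cα * (K / log 2) * (C₀ * exp (-n)) :=
      mul_le_mul_of_nonneg_left (hdecay n (by linarith)) (by positivity)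
    _ = Cα * (K / log 2) * C₀ * exp (-1 * n) := by rw [neg_one_mul]; ring
end
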